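/- arXiv:1401.2433 — 7 statements merged into one kernel-verified Lean document; each statement's English description precedes it below -/
import Mathlib

section
/- Suppose a₁ + a₂ + ⋯ + a_m = n with a_i ≥ 1 for all 1 ≤ i ≤ m. Then the number L(a₁, …, a_m) of primitive necklaces of length n on an m-letter alphabet in which letter i occurs exactly a_i times equals (1/n)·Σ_{ℓ | gcd(a₁,…,a_m)} μ(ℓ)·(n/ℓ)! / ((a₁/ℓ)!·(a₂/ℓ)!⋯(a_m/ℓ)!). -/
/-- A word (list of letters) is primitive if it is not a nontrivial power `q^r` (`r > 1`)
of a strictly shorter word `q`. -/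
def IsPrimitiveWord (s : List ℕ) : Prop :=
  ¬ ∃ (q : List ℕ) (r : ℕ), 1 < r ∧ q.length < s.length ∧ s = (List.replicate r q).flatten

/-- Necklaces: words up to cyclic rotation. -/
abbrev Necklace : Type := Quotient (List.IsRotated.setoid ℕ)

/-- `o(s)`: the number of odd letters of the word `s`. -/
def oddCount (s : List ℕ) : ℕ := s.countP (fun x => x % 2 = 1)

/-- The number of primitive necklaces of length `n` on the alphabet `{0,…,m-1}` in which
letter `i` occurs exactly `a i` times. -/
noncomputable def primNecklaceCount (n m : ℕ) (a : Fin m → ℕ) : ℕ :=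
  Nat.card {x : Necklace // ∃ s : List ℕ, Quotient.mk (List.IsRotated.setoid ℕ) s = x ∧
    s.length = n ∧ (∀ c ∈ s, c < m) ∧ IsPrimitiveWord s ∧ ∀ i : Fin m, s.count (i : ℕ) = a i}

/-!
Every word is uniquely a power `q ^ ℓ` of a primitive word `q` (uniqueness: `q ^ ℓ` has least
rotation period `|q|`), and the content of `q ^ ℓ` is `ℓ` times that of `q`. So the multinomial
number of words with content `c` is the sum, over `ℓ ∣ gcd c`, of the numbers of primitive words
with content `c / ℓ`, and Möbius inversion over the divisors of the gcd isolates the primitive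
words. Finally, a primitive word of length `n` has `n` distinct rotations, so there are `n` times as
many primitive words with content `a` as primitive necklaces.
-/

namespace List

variable {α : Type*}

theorem count_flatten_replicate [BEq α] (q : List α) (r : ℕ) (a : α) :
    (replicate r q).flatten.count a = r * q.count a := by
  simp [count_flatten]

theorem take_flatten_replicate (q : List α) {j r : ℕ} (hjr : j ≤ r) :
    (replicate r q).flatten.take (j * q.length) = (replicate j q).flatten := by
  rw [← Nat.add_sub_cancel' hjr, replicate_add, flatten_append]
  exact take_left' (by simp)

theorem take_length_flatten_replicate (q : List α) {r : ℕ} (hr : 0 < r) :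
    (replicate r q).flatten.take q.length = q := by
  simpa using take_flatten_replicate q (j := 1) hr

theorem flatten_replicate_flatten_replicate (q : List α) (k r : ℕ) :
    (replicate r (replicate k q).flatten).flatten = (replicate (k * r) q).flatten := by
  rw [← map_replicate, ← flatten_flatten, flatten_replicate_replicate, Nat.mul_comm]

theorem rotate_flatten_replicate_length (q : List α) (r : ℕ) :
    (replicate r q).flatten.rotate q.length = (replicate r q).flatten := by
  cases r with
  | zero => simp
  | succ r =>
    conv_lhs => rw [replicate_succ, flatten_cons, rotate_append_length_eq, ← flatten_concat,
      ← replicate_succ']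

theorem eq_flatten_replicate_of_append_comm {q s : List α} {k : ℕ}
    (hlen : s.length = k * q.length) (h : q ++ s = s ++ q) : s = (replicate k q).flatten := by
  induction k generalizing s with
  | zero => simpa using hlen
  | succ k ih =>
    have hq : s.take q.length = q := by
      have hle : q.length ≤ s.length := hlen ▸ Nat.le_mul_of_pos_left _ k.succ_pos
      simpa [take_append_of_le_length hle] using (congrArg (take q.length) h).symm
    obtain ⟨t, rfl⟩ : ∃ t, s = q ++ t := ⟨_, (hq ▸ take_append_drop q.length s).symm⟩
    have ht : t.length = k * q.length := by simp [Nat.succ_mul] at hlen; omega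
    rw [replicate_succ, flatten_cons, ← ih ht (by simpa using h)]

theorem eq_flatten_replicate_take_of_rotate_eq {s : List α} {d : ℕ} (hd : d ∣ s.length)
    (h : s.rotate d = s) : s = (replicate (s.length / d) (s.take d)).flatten := by
  rcases Nat.eq_zero_or_pos s.length with hs | hs
  · simp [eq_nil_of_length_eq_zero hs]
  have hds : d ≤ s.length := Nat.le_of_dvd hs hd
  apply eq_flatten_replicate_of_append_comm
  · rw [length_take_of_le hds, Nat.div_mul_cancel hd]
  · calc s.take d ++ s = s.take d ++ (s.drop d ++ s.take d) := by
          rw [← rotate_eq_drop_append_take hds, h]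
      _ = s ++ s.take d := by rw [← append_assoc, take_append_drop]

theorem iterate_rotate_one (s : List α) (k : ℕ) : (rotate · 1)^[k] s = s.rotate k := by
  induction k with
  | zero => simp
  | succ k ih => rw [Function.iterate_succ_apply', ih, rotate_rotate]

noncomputable def rotationPeriod (s : List α) : ℕ := Function.minimalPeriod (rotate · 1) s

theorem isPeriodicPt_rotate_one_iff {s : List α} {k : ℕ} :
    Function.IsPeriodicPt (rotate · 1) k s ↔ s.rotate k = s := by
  rw [Function.IsPeriodicPt, Function.IsFixedPt, iterate_rotate_one]

theorem rotate_rotationPeriod (s : List α) : s.rotate s.rotationPeriod = s :=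
  isPeriodicPt_rotate_one_iff.1 (Function.isPeriodicPt_minimalPeriod _ s)

theorem rotationPeriod_dvd {s : List α} {k : ℕ} (h : s.rotate k = s) : s.rotationPeriod ∣ k :=
  (isPeriodicPt_rotate_one_iff.2 h).minimalPeriod_dvd

theorem rotationPeriod_dvd_length (s : List α) : s.rotationPeriod ∣ s.length :=
  rotationPeriod_dvd s.rotate_length

theorem rotationPeriod_pos {s : List α} (hs : s ≠ []) : 0 < s.rotationPeriod :=
  Function.IsPeriodicPt.minimalPeriod_pos (length_pos_of_ne_nil hs)
    (isPeriodicPt_rotate_one_iff.2 s.rotate_length)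

theorem rotationPeriod_rotate (s : List α) (k : ℕ) :
    (s.rotate k).rotationPeriod = s.rotationPeriod := by
  rcases eq_or_ne s [] with rfl | hs
  · simp
  have hper : s ∈ Function.periodicPts (rotate · 1) :=
    ⟨s.length, length_pos_of_ne_nil hs, isPeriodicPt_rotate_one_iff.2 s.rotate_length⟩
  have h := Function.minimalPeriod_apply_iterate hper k
  rwa [iterate_rotate_one] at h

theorem rotate_injOn_Iio_rotationPeriod (s : List α) :
    Set.InjOn s.rotate (Set.Iio s.rotationPeriod) := by
  have h := Function.iterate_injOn_Iio_minimalPeriod (f := (rotate · 1)) (x := s)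
  simp only [iterate_rotate_one] at h
  exact h

end List

section PrimitiveWords

open List

theorem isPrimitiveWord_of_rotationPeriod_eq {s : List ℕ} (h : s.rotationPeriod = s.length) :
    IsPrimitiveWord s := by
  rintro ⟨q, r, -, hlt, rfl⟩
  have hq0 : q ≠ [] := by rintro rfl; simp at hlt
  have := Nat.le_of_dvd (length_pos_of_ne_nil hq0)
    (rotationPeriod_dvd (rotate_flatten_replicate_length q r))
  omega

namespace IsPrimitiveWord

variable {q : List ℕ}

theorem rotationPeriod_eq (hq : IsPrimitiveWord q) (hq0 : q ≠ []) :
    q.rotationPeriod = q.length := by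
  have hp := rotationPeriod_pos hq0
  have hle := Nat.le_of_dvd (length_pos_of_ne_nil hq0) q.rotationPeriod_dvd_length
  obtain ⟨c, hc⟩ := q.rotationPeriod_dvd_length
  by_contra hne
  refine hq ⟨q.take q.rotationPeriod, c, ?_, ?_, ?_⟩
  · by_contra
    interval_cases c <;> simp_all
  · rw [length_take]; omega
  · conv_lhs => rw [eq_flatten_replicate_take_of_rotate_eq ⟨c, hc⟩ q.rotate_rotationPeriod]
    rw [hc, Nat.mul_div_cancel_left _ hp]

theorem rotate (hq : IsPrimitiveWord q) (k : ℕ) : IsPrimitiveWord (q.rotate k) := by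
  rcases eq_or_ne q [] with rfl | hq0
  · simpa using hq
  apply isPrimitiveWord_of_rotationPeriod_eq
  rw [rotationPeriod_rotate, length_rotate, hq.rotationPeriod_eq hq0]

theorem rotationPeriod_flatten_replicate (hq : IsPrimitiveWord q) (hq0 : q ≠ []) {ℓ : ℕ}
    (hℓ : 0 < ℓ) : (replicate ℓ q).flatten.rotationPeriod = q.length := by
  set s := (replicate ℓ q).flatten
  set p := s.rotationPeriod
  have hpq : p ∣ q.length := rotationPeriod_dvd (rotate_flatten_replicate_length q ℓ)
  have hp : 0 < p := rotationPeriod_pos (by simp [s, hq0, hℓ.ne'])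
  have hu : (s.take p).length = p :=
    length_take_of_le <| Nat.le_of_dvd (by simp [s, length_pos_of_ne_nil hq0, hℓ])
      s.rotationPeriod_dvd_length
  have hqu : q = (replicate (q.length / p) (s.take p)).flatten := by
    have hle : q.length / p ≤ s.length / p :=
      Nat.div_le_div_right (by simpa [s] using Nat.le_mul_of_pos_left q.length hℓ)
    have key := take_flatten_replicate (s.take p) hle
    rw [hu, ← eq_flatten_replicate_take_of_rotate_eq s.rotationPeriod_dvd_length
      s.rotate_rotationPeriod, Nat.div_mul_cancel hpq, take_length_flatten_replicate q hℓ] at key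
    exact key
  have hqp : q.length ∣ p := by
    rw [← hq.rotationPeriod_eq hq0]
    refine rotationPeriod_dvd ?_
    rw [hqu]
    simpa [hu] using rotate_flatten_replicate_length (s.take p) (q.length / p)
  exact Nat.dvd_antisymm hpq hqp

theorem eq_of_flatten_replicate_eq {q' : List ℕ} (hq : IsPrimitiveWord q) (hq' : IsPrimitiveWord q')
    (hq0 : q ≠ []) {ℓ ℓ' : ℕ} (hℓ : 0 < ℓ) (hℓ' : 0 < ℓ')
    (h : (replicate ℓ q).flatten = (replicate ℓ' q').flatten) : q = q' := by
  have hq0' : q' ≠ [] := by rintro rfl; simp [hq0, hℓ.ne'] at h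
  have hlen : q.length = q'.length := by
    rw [← hq.rotationPeriod_flatten_replicate hq0 hℓ, h,
      hq'.rotationPeriod_flatten_replicate hq0' hℓ']
  rw [← take_length_flatten_replicate q hℓ, h, hlen, take_length_flatten_replicate q' hℓ']

end IsPrimitiveWord

theorem exists_isPrimitiveWord_eq_flatten_replicate (s : List ℕ) :
    ∃ q ℓ, IsPrimitiveWord q ∧ 0 < ℓ ∧ s = (replicate ℓ q).flatten := by
  induction h : s.length using Nat.strong_induction_on generalizing s with
  | _ n ih =>
  by_cases hs : IsPrimitiveWord s
  · exact ⟨s, 1, hs, one_pos, by simp⟩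
  obtain ⟨q, r, hr, hlt, rfl⟩ := not_not.1 hs
  obtain ⟨p, k, hp, hk, rfl⟩ := ih _ (h ▸ hlt) q rfl
  exact ⟨p, k * r, hp, Nat.mul_pos hk (by omega), flatten_replicate_flatten_replicate p k r⟩

end PrimitiveWords

theorem Nat.card_eq_card_mul_of_card_fiber_eq {α β : Type*} [Finite α] [Finite β] (f : α → β)
    {k : ℕ} (hk : ∀ b, Nat.card {a // f a = b} = k) : Nat.card α = Nat.card β * k := by
  have := Fintype.ofFinite β
  rw [← Nat.card_congr (Equiv.sigmaFiberEquiv f), Nat.card_sigma,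
    Finset.sum_congr rfl fun b _ => hk b, Finset.sum_const, Finset.card_univ, smul_eq_mul,
    Nat.card_eq_fintype_card]

section FiberCard

variable {α ι : Type*} [Fintype α] [Fintype ι] [DecidableEq ι]

theorem exists_card_fiber_eq {c : ι → ℕ} (hc : ∑ i, c i = Fintype.card α) :
    ∃ f : α → ι, ∀ i, Fintype.card {a // f a = i} = c i := by
  let e : α ≃ Σ i, Fin (c i) := Fintype.equivOfCardEq (by simp [hc])
  refine ⟨fun a => (e a).1, fun i => ?_⟩
  rw [Fintype.card_congr (e.subtypeEquiv (q := fun p => p.1 = i) fun _ => Iff.rfl),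
    Fintype.card_congr (Equiv.sigmaSubtype i), Fintype.card_fin]

/-- Orbit–stabiliser for `Perm α` acting on `α → ι`: the stabiliser of a map with fibres of
sizes `c i` has order `∏ i, (c i)!`. -/
theorem card_fiber_eq_mul_prod_factorial [DecidableEq α] {c : ι → ℕ}
    (hc : ∑ i, c i = Fintype.card α) :
    Nat.card {f : α → ι // ∀ i, Fintype.card {a // f a = i} = c i} * ∏ i, (c i).factorial =
      (Fintype.card α).factorial := by
  obtain ⟨f₀, hf₀⟩ := exists_card_fiber_eq hc
  let Φ : Equiv.Perm α → {f : α → ι // ∀ i, Fintype.card {a // f a = i} = c i} :=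
    fun σ => ⟨f₀ ∘ σ, fun i => (hf₀ i) ▸ Fintype.card_congr (σ.subtypeEquiv fun _ => Iff.rfl)⟩
  have hfiber : ∀ f, Nat.card {σ // Φ σ = f} = ∏ i, (c i).factorial := by
    rintro ⟨f, hf⟩
    obtain ⟨σ₀, hσ₀⟩ : ∃ σ₀ : Equiv.Perm α, f₀ ∘ σ₀ = f :=
      ⟨Equiv.ofFiberEquiv fun i => Fintype.equivOfCardEq (by rw [hf, hf₀]),
        funext fun a => Equiv.ofFiberEquiv_map _ a⟩
    have e : {σ // Φ σ = ⟨f, hf⟩} ≃ {g : Equiv.Perm α // f₀ ∘ g = f₀} :=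
      Equiv.subtypeEquiv (Equiv.mulRight σ₀⁻¹) fun σ => by
        subst hσ₀
        rw [Subtype.ext_iff]
        simp [Φ, Equiv.Perm.coe_mul, ← Function.comp_assoc, Equiv.Perm.inv_def,
          Equiv.comp_symm_eq]
    rw [Nat.card_congr e, Nat.card_eq_fintype_card, DomMulAct.stabilizer_card]
    simp [hf₀]
  have := Nat.card_eq_card_mul_of_card_fiber_eq Φ hfiber
  rwa [Nat.card_eq_fintype_card (α := Equiv.Perm α), Fintype.card_perm, eq_comm] at this

end FiberCard

section Words

variable {m : ℕ}

def wordsWithContent (c : Fin m → ℕ) : Set (List ℕ) :=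
  {s | (∀ x ∈ s, x < m) ∧ ∀ i : Fin m, s.count (i : ℕ) = c i}

def primitiveWordsWithContent (c : Fin m → ℕ) : Set (List ℕ) :=
  {s ∈ wordsWithContent c | IsPrimitiveWord s}

theorem length_eq_sum_of_mem_wordsWithContent {c : Fin m → ℕ} {s : List ℕ}
    (hs : s ∈ wordsWithContent c) : s.length = ∑ i, c i := by
  calc s.length = ∑ x ∈ Finset.range m, s.count x := by
        rw [← Multiset.coe_card, ← Multiset.sum_count_eq_card (s := Finset.range m)
          (by simpa using hs.1)]
        simp
    _ = ∑ i, c i := by simp [← Fin.sum_univ_eq_sum_range, hs.2]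

theorem ne_nil_of_mem_wordsWithContent {c : Fin m → ℕ} (hc : Finset.univ.gcd c ≠ 0) {s : List ℕ}
    (hs : s ∈ wordsWithContent c) : s ≠ [] := by
  rintro rfl
  exact hc (Finset.gcd_eq_zero_iff.2 fun i _ => by simpa using (hs.2 i).symm)

theorem count_ofFn_val {n : ℕ} (v : Fin n → Fin m) (i : Fin m) :
    (List.ofFn fun k => (v k : ℕ)).count (i : ℕ) = Fintype.card {k // v k = i} := by
  rw [← Function.comp_def, ← List.map_ofFn, List.count_map_of_injective _ _ Fin.val_injective,
    ← Multiset.coe_count, ← Fin.univ_val_map, Multiset.count_map, Fintype.card_subtype]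
  simp [Finset.card, eq_comm]

noncomputable def wordsWithContentEquiv (c : Fin m → ℕ) :
    {v : Fin (∑ i, c i) → Fin m // ∀ i, Fintype.card {k // v k = i} = c i} ≃
      wordsWithContent c :=
  Equiv.ofBijective
    (fun v => ⟨List.ofFn fun k => (v.1 k : ℕ), by simp, fun i => by rw [count_ofFn_val, v.2]⟩)
    ⟨fun v w h => Subtype.ext <| funext fun k => Fin.ext <|
        congrFun (List.ofFn_injective (congrArg Subtype.val h)) k, by
      rintro ⟨s, hs⟩
      have hlen := length_eq_sum_of_mem_wordsWithContent hs
      let v : Fin (∑ i, c i) → Fin m := fun k => ⟨s[k.1], hs.1 _ (List.getElem_mem _)⟩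
      have hv : (List.ofFn fun k => (v k : ℕ)) = s :=
        List.ext_getElem (by simp [hlen]) fun k _ _ => by simp [v]
      exact ⟨⟨v, fun i => by rw [← count_ofFn_val, hv, hs.2]⟩, Subtype.ext hv⟩⟩

instance (c : Fin m → ℕ) : Finite (wordsWithContent c) :=
  Finite.of_equiv _ (wordsWithContentEquiv c)

instance (c : Fin m → ℕ) : Finite (primitiveWordsWithContent c) :=
  Finite.Set.subset _ fun _ hs => hs.1

theorem card_wordsWithContent (c : Fin m → ℕ) :
    Nat.card (wordsWithContent c) = Nat.multinomial Finset.univ c := by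
  have h := card_fiber_eq_mul_prod_factorial (α := Fin (∑ i, c i)) (c := c) (by simp)
  rw [Nat.card_congr (wordsWithContentEquiv c).symm]
  rw [Fintype.card_fin, ← Nat.multinomial_spec, mul_comm] at h
  exact Nat.eq_of_mul_eq_mul_left (Finset.prod_pos fun i _ => (c i).factorial_pos) h

end Words

section Decomposition

variable {m : ℕ}

theorem flatten_replicate_mem_wordsWithContent {c : Fin m → ℕ} {ℓ : ℕ} (hℓ : ∀ i, ℓ ∣ c i)
    {q : List ℕ} (hq : q ∈ wordsWithContent fun i => c i / ℓ) :
    (List.replicate ℓ q).flatten ∈ wordsWithContent c := by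
  refine ⟨fun x hx => ?_, fun i => ?_⟩
  · obtain ⟨_, ht, hx⟩ := List.mem_flatten.1 hx
    exact hq.1 x (List.eq_of_mem_replicate ht ▸ hx)
  · rw [List.count_flatten_replicate, hq.2 i, Nat.mul_div_cancel' (hℓ i)]

/-- Every word is uniquely `q ^ ℓ` with `q` primitive; group the words by the exponent `ℓ`. -/
theorem card_wordsWithContent_eq_sum (c : Fin m → ℕ) (hc : Finset.univ.gcd c ≠ 0) :
    Nat.card (wordsWithContent c) =
      ∑ ℓ ∈ (Finset.univ.gcd c).divisors,
        Nat.card (primitiveWordsWithContent fun i => c i / ℓ) := by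
  have hdvd {ℓ : ℕ} (hℓ : ℓ ∈ (Finset.univ.gcd c).divisors) (i : Fin m) : ℓ ∣ c i :=
    (Nat.dvd_of_mem_divisors hℓ).trans (Finset.gcd_dvd (Finset.mem_univ i))
  rw [← Finset.sum_coe_sort, ← Nat.card_sigma]
  refine (Nat.card_eq_of_bijective (fun p => ⟨(List.replicate p.1 p.2.1).flatten,
    flatten_replicate_mem_wordsWithContent (hdvd p.1.2) p.2.2.1⟩) ⟨?_, ?_⟩).symm
  · rintro ⟨⟨ℓ, hℓ⟩, q, hq⟩ ⟨⟨ℓ', hℓ'⟩, q', hq'⟩ h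
    have h : (List.replicate ℓ q).flatten = (List.replicate ℓ' q').flatten :=
      congrArg Subtype.val h
    have hpos := Nat.pos_of_mem_divisors hℓ
    have hq0 : q ≠ [] := by
      rintro rfl
      exact ne_nil_of_mem_wordsWithContent hc
        (flatten_replicate_mem_wordsWithContent (hdvd hℓ) hq.1) (by simp)
    have hqq' := hq.2.eq_of_flatten_replicate_eq hq'.2 hq0 hpos (Nat.pos_of_mem_divisors hℓ') h
    subst hqq'
    have hℓℓ' : ℓ = ℓ' := by simpa [hq0] using congrArg List.length h
    subst hℓℓ'
    rfl
  · rintro ⟨s, hs⟩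
    obtain ⟨q, ℓ, hq, hℓ, rfl⟩ := exists_isPrimitiveWord_eq_flatten_replicate s
    have hcount (i : Fin m) : c i = ℓ * q.count (i : ℕ) := by
      rw [← hs.2 i, List.count_flatten_replicate]
    have hmem : ℓ ∈ (Finset.univ.gcd c).divisors :=
      Nat.mem_divisors.2 ⟨Finset.dvd_gcd fun i _ => ⟨_, hcount i⟩, hc⟩
    refine ⟨⟨⟨ℓ, hmem⟩, q, ⟨fun x hx => hs.1 x ?_, fun i => ?_⟩, hq⟩, rfl⟩
    · exact List.mem_flatten.2 ⟨q, List.mem_replicate.2 ⟨hℓ.ne', rfl⟩, hx⟩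
    · simp [hcount i, Nat.mul_div_cancel_left _ hℓ]

end Decomposition

open scoped ArithmeticFunction.Moebius in
/-- Substituting `c = k • b` with `gcd b = 1` reduces this to Möbius inversion in `k`. -/
theorem sum_divisors_gcd_moebius_smul {ι R : Type*} [Fintype ι] [AddCommGroup R]
    {P W : (ι → ℕ) → R}
    (hPW : ∀ c, Finset.univ.gcd c ≠ 0 →
      W c = ∑ ℓ ∈ (Finset.univ.gcd c).divisors, P fun i => c i / ℓ)
    {c : ι → ℕ} (hc : Finset.univ.gcd c ≠ 0) :
    ∑ ℓ ∈ (Finset.univ.gcd c).divisors, μ ℓ • W (fun i => c i / ℓ) = P c := by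
  set g := Finset.univ.gcd c
  have hne : (Finset.univ : Finset ι).Nonempty := by
    by_contra h
    exact hc (by simp [g, Finset.not_nonempty_iff_eq_empty.1 h])
  obtain ⟨b, hcb, hb⟩ := Finset.extract_gcd c hne
  have hgcd (k : ℕ) : Finset.univ.gcd (fun i => k * b i) = k := by
    rw [Finset.gcd_mul_left, hb, normalize_eq, mul_one]
  have hdiv {k ℓ : ℕ} (hℓ : ℓ ∣ k) : (fun i => k * b i / ℓ) = fun i => k / ℓ * b i :=
    funext fun i => Nat.mul_div_right_comm hℓ _
  have key : ∀ k > 0, ∑ d ∈ k.divisors, P (fun i => d * b i) = W (fun i => k * b i) := by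
    intro k hk
    rw [hPW _ (by rw [hgcd]; omega), hgcd, ← Nat.sum_div_divisors]
    exact Finset.sum_congr rfl fun ℓ hℓ => by rw [hdiv (Nat.dvd_of_mem_divisors hℓ)]
  have hinv := ArithmeticFunction.sum_eq_iff_sum_smul_moebius_eq.1 key g (Nat.pos_of_ne_zero hc)
  rw [Nat.sum_divisorsAntidiagonal (fun x y => μ x • W fun i => y * b i)] at hinv
  have hc' : c = fun i => g * b i := funext fun i => hcb i (Finset.mem_univ i)
  rw [hc', ← hinv]
  refine Finset.sum_congr rfl fun ℓ hℓ => ?_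
  rw [hdiv (Nat.dvd_of_mem_divisors hℓ)]

section Necklaces

variable {m : ℕ}

theorem rotate_mem_primitiveWordsWithContent {c : Fin m → ℕ} {s : List ℕ}
    (hs : s ∈ primitiveWordsWithContent c) (k : ℕ) : s.rotate k ∈ primitiveWordsWithContent c :=
  ⟨⟨fun x hx => hs.1.1 x (List.mem_rotate.1 hx),
    fun i => by rw [(s.rotate_perm k).count_eq, hs.1.2 i]⟩, hs.2.rotate k⟩

/-- Each primitive necklace is the class of exactly `n` distinct primitive words, its rotations. -/
theorem card_primitiveWordsWithContent (c : Fin m → ℕ) (hc : Finset.univ.gcd c ≠ 0) :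
    Nat.card (primitiveWordsWithContent c) = (∑ i, c i) * primNecklaceCount (∑ i, c i) m c := by
  set n := ∑ i, c i
  let G : primitiveWordsWithContent c → {x : Necklace // ∃ s : List ℕ,
      Quotient.mk (List.IsRotated.setoid ℕ) s = x ∧ s.length = n ∧ (∀ c ∈ s, c < m) ∧
        IsPrimitiveWord s ∧ ∀ i : Fin m, s.count (i : ℕ) = c i} :=
    fun s => ⟨Quotient.mk _ s.1, s.1, rfl, length_eq_sum_of_mem_wordsWithContent s.2.1, s.2.1.1,
      s.2.2, s.2.1.2⟩
  have hG : Function.Surjective G := by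
    rintro ⟨x, s, rfl, -, hlt, hprim, hcount⟩
    exact ⟨⟨s, ⟨hlt, hcount⟩, hprim⟩, rfl⟩
  have := Finite.of_surjective G hG
  rw [primNecklaceCount, mul_comm, Nat.card_eq_card_mul_of_card_fiber_eq G (k := n) fun x => ?_]
  obtain ⟨s₀, rfl⟩ := hG x
  have hlen : s₀.1.length = n := length_eq_sum_of_mem_wordsWithContent s₀.2.1
  have hper : s₀.1.rotationPeriod = n :=
    hlen ▸ s₀.2.2.rotationPeriod_eq (ne_nil_of_mem_wordsWithContent hc s₀.2.1)
  let f : Fin n → {s // G s = G s₀} := fun k =>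
    ⟨⟨s₀.1.rotate k, rotate_mem_primitiveWordsWithContent s₀.2 k⟩,
      Subtype.ext (Quotient.sound (List.IsRotated.symm ⟨k, rfl⟩))⟩
  rw [← Nat.card_eq_of_bijective f ⟨fun k j h => ?_, fun t => ?_⟩, Nat.card_eq_fintype_card,
    Fintype.card_fin]
  · exact Fin.ext (s₀.1.rotate_injOn_Iio_rotationPeriod (by rw [Set.mem_Iio, hper]; exact k.2)
      (by rw [Set.mem_Iio, hper]; exact j.2) (congrArg (·.1.1) h))
  · obtain ⟨k, hk⟩ := (Quotient.exact (congrArg Subtype.val t.2)).symm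
    refine ⟨⟨k % n, Nat.mod_lt _ (hper ▸ List.rotationPeriod_pos
      (ne_nil_of_mem_wordsWithContent hc s₀.2.1))⟩, Subtype.ext (Subtype.ext ?_)⟩
    change s₀.1.rotate (k % n) = t.1.1
    have hmod := List.rotate_mod s₀.1 k
    rw [hlen] at hmod
    rw [hmod, hk]

end Necklaces

theorem primitive_necklace_count_general (n m : ℕ) (a : Fin m → ℕ)
    (hsum : ∑ i, a i = n) :
    (n : ℤ) * primNecklaceCount n m a
      = ∑ ℓ ∈ (Finset.univ.gcd a).divisors,
          ArithmeticFunction.moebius ℓ *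
            (((n / ℓ).factorial / ∏ i : Fin m, (a i / ℓ).factorial : ℕ) : ℤ) := by
  subst hsum
  rcases eq_or_ne (Finset.univ.gcd a) 0 with hg | hg
  · simp [hg, Finset.gcd_eq_zero_iff.1 hg]
  rw [← Nat.cast_mul, ← card_primitiveWordsWithContent a hg,
    ← sum_divisors_gcd_moebius_smul (P := fun c => (Nat.card (primitiveWordsWithContent c) : ℤ))
      (W := fun c => (Nat.card (wordsWithContent c) : ℤ))
      (fun c hc => by simp [card_wordsWithContent_eq_sum c hc]) hg]
  refine Finset.sum_congr rfl fun ℓ hℓ => ?_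
  have hdvd (i : Fin m) (_ : i ∈ Finset.univ) : ℓ ∣ a i :=
    (Nat.dvd_of_mem_divisors hℓ).trans (Finset.gcd_dvd (Finset.mem_univ i))
  rw [smul_eq_mul, card_wordsWithContent, Nat.multinomial, Nat.sum_div hdvd]

/-- If `a₁ + ⋯ + a_m = n` with every `a_i ≥ 1`, then
`n · L(a₁,…,a_m) = ∑_{ℓ ∣ gcd(a₁,…,a_m)} μ(ℓ) · (n/ℓ)! / ((a₁/ℓ)! ⋯ (a_m/ℓ)!)`. -/
theorem primitive_necklace_count (n m : ℕ) (a : Fin m → ℕ)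
    (ha : ∀ i, 1 ≤ a i) (hsum : ∑ i, a i = n) :
    (n : ℤ) * primNecklaceCount n m a
      = ∑ ℓ ∈ (Finset.univ.gcd a).divisors,
          ArithmeticFunction.moebius ℓ *
            (((n / ℓ).factorial / ∏ i : Fin m, (a i / ℓ).factorial : ℕ) : ℤ) :=
  primitive_necklace_count_general n m a hsum
end

section
/- Let λ = (λ₁, …, λ_k) be a composition of n, let d = gcd(λ₁, …, λ_k), and let m, n ≥ 1. Then |N_λ^{(m)}| = L̄_λ(m) + L̄_{λ/2}(m/2) if d is even and m ≡ 2 (mod 4), and |N_λ^{(m)}| = L̄_λ(m) otherwise. -/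
/-- Membership condition for `N_λ`: `s` is a word of length `n` on the alphabet
`{0,…,2k-1}` with `a_{2t}(s) + a_{2t+1}(s) = λ_{t+1}` for all `0 ≤ t ≤ k-1`, and `s` is either
primitive or of the form `q²` with `q` primitive and `o(q)` odd. -/
def MemN (n k : ℕ) (l : List ℕ) (s : List ℕ) : Prop :=
  s.length = n ∧ (∀ c ∈ s, c < 2 * k) ∧
    (∀ t < k, s.count (2 * t) + s.count (2 * t + 1) = l.getD t 0) ∧
    (IsPrimitiveWord s ∨ ∃ q : List ℕ, s = q ++ q ∧ IsPrimitiveWord q ∧ Odd (oddCount q))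

/-- `|N_λ^{(m)}|`: the number of necklaces in `N_λ` with exactly `m` odd letters. -/
noncomputable def cardN (n k : ℕ) (l : List ℕ) (m : ℕ) : ℕ :=
  Nat.card {x : Necklace // ∃ s : List ℕ, Quotient.mk (List.IsRotated.setoid ℕ) s = x ∧
    MemN n k l s ∧ oddCount s = m}

/-- `L̄_λ(m)`: the number of primitive necklaces in `N_λ^{(m)}`. -/
noncomputable def cardLbar (n k : ℕ) (l : List ℕ) (m : ℕ) : ℕ :=
  Nat.card {x : Necklace // ∃ s : List ℕ, Quotient.mk (List.IsRotated.setoid ℕ) s = x ∧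
    MemN n k l s ∧ oddCount s = m ∧ IsPrimitiveWord s}

/-!
Every necklace of `N_λ^{(m)}` is either primitive or the class of a square `q²` with `q`
primitive and `o(q)` odd; rotations of a square are squares, so the two kinds are disjoint and
`|N_λ^{(m)}| = L̄_λ(m) + (number of square necklaces)`. Since `q² ~ r²` forces `q ~ r`, squaring
is injective on necklaces. A square `q²` doubles every letter multiplicity, so all parts of `λ`
are even, and `m = 2 o(q)` with `o(q)` odd, so `m ≡ 2 (mod 4)`. Under these two conditions
squaring maps the primitive necklaces of `N_{λ/2}^{(m/2)}` bijectively onto the square necklaces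
of `N_λ^{(m)}`.
-/

namespace List

variable {α : Type*} {a b s : List α}

theorem rotate_one_append_self (a : List α) : (a ++ a).rotate 1 = a.rotate 1 ++ a.rotate 1 := by
  cases a <;> simp

theorem rotate_append_self (a : List α) (j : ℕ) :
    (a ++ a).rotate j = a.rotate j ++ a.rotate j := by
  induction j with
  | zero => simp
  | succ j ih => rw [← rotate_rotate, ih, rotate_one_append_self, rotate_rotate]

theorem IsRotated.append_self (h : a ~r b) : a ++ a ~r b ++ b := by
  obtain ⟨j, rfl⟩ := h
  exact ⟨j, rotate_append_self a j⟩

theorem IsRotated.exists_eq_append_self (h : a ++ a ~r s) : ∃ b, a ~r b ∧ s = b ++ b := by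
  obtain ⟨j, rfl⟩ := h
  exact ⟨a.rotate j, ⟨j, rfl⟩, rotate_append_self a j⟩

theorem IsRotated.of_append_self (h : a ++ a ~r b ++ b) : a ~r b := by
  obtain ⟨c, hac, hc⟩ := h.exists_eq_append_self
  have hlen : b.length = c.length := by
    have := congrArg length hc
    simp only [length_append] at this
    omega
  rwa [(append_inj hc hlen).1]

theorem count_append_self [BEq α] (x : α) (a : List α) : (a ++ a).count x = 2 * a.count x := by
  rw [count_append, two_mul]

theorem even_getD {l : List ℕ} (hl : ∀ x ∈ l, Even x) (t : ℕ) : Even (l.getD t 0) := by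
  rw [getD_eq_getElem?_getD]
  cases h : l[t]? with
  | none => exact ⟨0, rfl⟩
  | some x => exact hl x (mem_of_getElem? h)

theorem even_foldr_gcd_iff (l : List ℕ) : Even (l.foldr Nat.gcd 0) ↔ ∀ x ∈ l, Even x := by
  induction l with
  | nil => simp
  | cons a t ih =>
    simp only [foldr_cons, mem_cons, forall_eq_or_imp, even_iff_two_dvd, Nat.dvd_gcd_iff] at ih ⊢
    rw [ih]

end List

theorem finite_setOf_length_eq_forall_lt (n M : ℕ) :
    {s : List ℕ | s.length = n ∧ ∀ c ∈ s, c < M}.Finite := by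
  refine ((List.finite_length_eq (Fin M) n).image (List.map Fin.val)).subset ?_
  rintro s ⟨hlen, hlt⟩
  exact ⟨s.pmap Fin.mk hlt, by simpa using hlen, by simp [List.map_pmap]⟩

theorem oddCount_append_self (q : List ℕ) : oddCount (q ++ q) = 2 * oddCount q :=
  List.countP_append.trans (two_mul _).symm

theorem ne_nil_of_odd_oddCount {q : List ℕ} (h : Odd (oddCount q)) : q ≠ [] := by
  rintro rfl
  exact Nat.not_odd_zero h

theorem not_isPrimitiveWord_append_self {q : List ℕ} (hq : q ≠ []) :
    ¬ IsPrimitiveWord (q ++ q) :=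
  fun h => h ⟨q, 2, one_lt_two, by simp [List.length_pos_iff_ne_nil.2 hq], by simp⟩

def Necklace.square : Necklace → Necklace :=
  Quotient.map (fun w => w ++ w) fun _ _ => List.IsRotated.append_self

theorem Necklace.square_injective : Function.Injective Necklace.square := by
  rintro ⟨a⟩ ⟨b⟩ h
  exact Quotient.sound (Quotient.exact h).of_append_self

def necklacesOf (p : List ℕ → Prop) : Set Necklace :=
  {x | ∃ s, Quotient.mk _ s = x ∧ p s}

theorem necklacesOf_or (p q : List ℕ → Prop) :
    necklacesOf (fun s => p s ∨ q s) = necklacesOf p ∪ necklacesOf q := by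
  ext x
  simp only [necklacesOf, Set.mem_ofPred_eq, Set.mem_union, and_or_left, exists_or]

theorem necklacesOf_append_self (p : List ℕ → Prop) :
    necklacesOf (fun s => ∃ q, s = q ++ q ∧ p q) = Necklace.square '' necklacesOf p := by
  ext x
  constructor
  · rintro ⟨_, rfl, q, rfl, hq⟩
    exact ⟨Quotient.mk _ q, ⟨q, rfl, hq⟩, rfl⟩
  · rintro ⟨_, ⟨q, rfl, hq⟩, rfl⟩
    exact ⟨q ++ q, rfl, q, rfl, hq⟩

theorem necklacesOf_finite {p : List ℕ → Prop} (h : {s | p s}.Finite) :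
    (necklacesOf p).Finite :=
  (h.image _).subset fun _ ⟨s, hs, hps⟩ => ⟨s, hps, hs⟩

theorem cardN_eq_ncard (n k : ℕ) (l : List ℕ) (m : ℕ) :
    cardN n k l m = (necklacesOf fun s => MemN n k l s ∧ oddCount s = m).ncard :=
  Nat.card_coe_set_eq _

theorem cardLbar_eq_ncard (n k : ℕ) (l : List ℕ) (m : ℕ) :
    cardLbar n k l m =
      (necklacesOf fun s => MemN n k l s ∧ oddCount s = m ∧ IsPrimitiveWord s).ncard :=
  Nat.card_coe_set_eq _

/-- `q²` belongs to `N_λ^{(m)}` through the second, non-primitive, clause of `MemN`. -/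
def IsSquareRoot (n k : ℕ) (l : List ℕ) (m : ℕ) (q : List ℕ) : Prop :=
  MemN n k l (q ++ q) ∧ oddCount (q ++ q) = m ∧ IsPrimitiveWord q ∧ Odd (oddCount q)

section IsSquareRoot

variable {n k m : ℕ} {l q : List ℕ}

theorem IsSquareRoot.forall_even (hk : l.length = k) (h : IsSquareRoot n k l m q) :
    ∀ x ∈ l, Even x := by
  intro x hx
  obtain ⟨t, ht, rfl⟩ := List.mem_iff_getElem.1 hx
  have hcount := h.1.2.2.1 t (hk ▸ ht)
  rw [List.count_append_self, List.count_append_self, List.getD_eq_getElem l 0 ht] at hcount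
  exact ⟨q.count (2 * t) + q.count (2 * t + 1), by omega⟩

theorem IsSquareRoot.mod_four_eq_two (h : IsSquareRoot n k l m q) : m % 4 = 2 := by
  obtain ⟨-, hm, -, ⟨r, hr⟩⟩ := h
  rw [oddCount_append_self] at hm
  omega

theorem isSquareRoot_iff (hn : Even n) (hl : ∀ t, Even (l.getD t 0)) (hm : m % 4 = 2) :
    IsSquareRoot n k l m q ↔
      MemN (n / 2) k (l.map (· / 2)) q ∧ oddCount q = m / 2 ∧ IsPrimitiveWord q := by
  obtain ⟨n', rfl⟩ := hn
  have hhalf (t : ℕ) : (l.map (· / 2)).getD t 0 = l.getD t 0 / 2 := List.getD_map (l := l) (d := 0) (· / 2)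
  simp only [IsSquareRoot, MemN, List.length_append, List.mem_append, List.count_append_self,
    oddCount_append_self, hhalf, Nat.odd_iff]
  constructor
  · rintro ⟨⟨hlen, hlt, hcount, -⟩, hodd, hprim, -⟩
    refine ⟨⟨by omega, fun c hc => hlt c (Or.inl hc), fun t ht => ?_, Or.inl hprim⟩,
      by omega, hprim⟩
    have := hcount t ht
    omega
  · rintro ⟨⟨hlen, hlt, hcount, -⟩, hodd, hprim⟩
    refine ⟨⟨by omega, fun c hc => hc.elim (hlt c) (hlt c), fun t ht => ?_,
      Or.inr ⟨q, rfl, hprim, by omega⟩⟩, by omega, hprim, by omega⟩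
    obtain ⟨r, hr⟩ := hl t
    have := hcount t ht
    omega

end IsSquareRoot

theorem cardN_eq_cardLbar_add (n k : ℕ) (l : List ℕ) (m : ℕ) :
    cardN n k l m =
      cardLbar n k l m + (Necklace.square '' necklacesOf (IsSquareRoot n k l m)).ncard := by
  have hsplit : necklacesOf (fun s => MemN n k l s ∧ oddCount s = m) =
      necklacesOf (fun s => MemN n k l s ∧ oddCount s = m ∧ IsPrimitiveWord s) ∪
        Necklace.square '' necklacesOf (IsSquareRoot n k l m) := by
    rw [← necklacesOf_append_self, ← necklacesOf_or]
    congr! 2 with s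
    constructor
    · rintro ⟨hs, rfl⟩
      rcases hs.2.2.2 with hprim | ⟨q, rfl, hq⟩
      · exact Or.inl ⟨hs, rfl, hprim⟩
      · exact Or.inr ⟨q, rfl, hs, rfl, hq⟩
    · rintro (⟨hs, hm, -⟩ | ⟨q, rfl, hs, hm, -⟩) <;> exact ⟨hs, hm⟩
  have hdisj : Disjoint
      (necklacesOf fun s => MemN n k l s ∧ oddCount s = m ∧ IsPrimitiveWord s)
      (Necklace.square '' necklacesOf (IsSquareRoot n k l m)) := by
    rw [Set.disjoint_left]
    rintro _ ⟨s, rfl, -, -, hprim⟩ ⟨_, ⟨q, rfl, hq⟩, hsq⟩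
    obtain ⟨b, hqb, rfl⟩ := (Quotient.exact hsq).exists_eq_append_self
    have hb : b ≠ [] := fun hb => ne_nil_of_odd_oddCount hq.2.2.2
      (List.isRotated_nil_iff.1 (hb ▸ hqb))
    exact not_isPrimitiveWord_append_self hb hprim
  have hfin : (necklacesOf fun s => MemN n k l s ∧ oddCount s = m).Finite :=
    necklacesOf_finite ((finite_setOf_length_eq_forall_lt n (2 * k)).subset
      fun _ hs => ⟨hs.1.1, hs.1.2.1⟩)
  rw [hsplit] at hfin
  rw [cardN_eq_ncard, cardLbar_eq_ncard, hsplit,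
    Set.ncard_union_eq hdisj (hfin.subset Set.subset_union_left)
      (hfin.subset Set.subset_union_right)]

theorem ncard_image_square_isSquareRoot {n k m : ℕ} {l : List ℕ} (hsum : l.sum = n)
    (hl : ∀ x ∈ l, Even x) (hm : m % 4 = 2) :
    (Necklace.square '' necklacesOf (IsSquareRoot n k l m)).ncard =
      cardLbar (n / 2) k (l.map (· / 2)) (m / 2) := by
  have hn : Even n := even_iff_two_dvd.2 (hsum ▸ List.dvd_sum fun x hx => (hl x hx).two_dvd)
  rw [Set.ncard_image_of_injective _ Necklace.square_injective, cardLbar_eq_ncard]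
  congr 2
  funext q
  exact propext <| isSquareRoot_iff hn (List.even_getD hl) hm

theorem cardN_eq_cardLbar_general (n k m d : ℕ) (l : List ℕ)
    (hk : l.length = k) (hsum : l.sum = n)
    (hd : d = l.foldr Nat.gcd 0) :
    cardN n k l m =
      if Even d ∧ m % 4 = 2 then
        cardLbar n k l m + cardLbar (n / 2) k (l.map (· / 2)) (m / 2)
      else cardLbar n k l m := by
  rw [cardN_eq_cardLbar_add]
  split_ifs with h
  · rw [ncard_image_square_isSquareRoot hsum ((List.even_foldr_gcd_iff l).1 (hd ▸ h.1)) h.2]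
  · have hempty : necklacesOf (IsSquareRoot n k l m) = ∅ :=
      Set.eq_empty_of_forall_notMem fun _ ⟨_, _, hq⟩ =>
        h ⟨hd ▸ (List.even_foldr_gcd_iff l).2 (hq.forall_even hk), hq.mod_four_eq_two⟩
    rw [hempty, Set.image_empty, Set.ncard_empty, add_zero]

/-- For a composition `λ` of `n ≥ 1` with `k` parts, `d = gcd(λ₁,…,λ_k)` and `m ≥ 1`:
`|N_λ^{(m)}| = L̄_λ(m) + L̄_{λ/2}(m/2)` if `d` is even and `m ≡ 2 (mod 4)`, and
`|N_λ^{(m)}| = L̄_λ(m)` otherwise. -/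
theorem cardN_eq_cardLbar (n k m d : ℕ) (l : List ℕ)
    (hk : l.length = k) (hpos : ∀ x ∈ l, 0 < x) (hsum : l.sum = n)
    (hd : d = l.foldr Nat.gcd 0) (hn : 1 ≤ n) (hm : 1 ≤ m) :
    cardN n k l m =
      if Even d ∧ m % 4 = 2 then
        cardLbar n k l m + cardLbar (n / 2) k (l.map (· / 2)) (m / 2)
      else cardLbar n k l m :=
  cardN_eq_cardLbar_general n k m d l hk hsum hd
end

section
/- For every composition λ of n and every 0 ≤ m ≤ n, one has L̄_λ(m) = L̄_λ(n−m). -/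
/-!
Exchanging the letters `2t ↔ 2t+1` preserves the counts `a_{2t} + a_{2t+1}`, commutes with
rotation and preserves primitivity, while it sends `o(s)` to `n - o(s)`. It therefore induces an
involution on primitive necklaces which exchanges those of `L̄_λ(m)` and of `L̄_λ(n-m)`.
-/

def flipParity (x : ℕ) : ℕ := if x % 2 = 0 then x + 1 else x - 1

lemma flipParity_involutive : Function.Involutive flipParity := by
  intro x
  unfold flipParity
  split_ifs <;> omega

lemma flipParity_two_mul (t : ℕ) : flipParity (2 * t) = 2 * t + 1 := by
  simp [flipParity]

lemma flipParity_two_mul_add_one (t : ℕ) : flipParity (2 * t + 1) = 2 * t := by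
  simp [flipParity, Nat.add_mod]

lemma flipParity_mod_two_eq_one_iff (x : ℕ) : flipParity x % 2 = 1 ↔ ¬x % 2 = 1 := by
  unfold flipParity
  split_ifs <;> omega

lemma flipParity_lt_two_mul {k x : ℕ} (hx : x < 2 * k) : flipParity x < 2 * k := by
  unfold flipParity
  split_ifs <;> omega

lemma IsPrimitiveWord.map {f : ℕ → ℕ} (hf : Function.Injective f) {s : List ℕ}
    (hs : IsPrimitiveWord s) : IsPrimitiveWord (s.map f) := by
  obtain ⟨g, hgf⟩ := hf.hasLeftInverse
  rintro ⟨q, r, hr, hlen, hq⟩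
  refine hs ⟨q.map g, r, hr, by simpa using hlen, ?_⟩
  rw [← List.map_id s, ← hgf.id, ← List.map_map, hq, List.map_flatten, List.map_replicate]

lemma oddCount_map_flipParity (s : List ℕ) :
    oddCount (s.map flipParity) = s.length - oddCount s := by
  have hflip : oddCount (s.map flipParity) = s.countP (fun x => decide ¬x % 2 = 1) := by
    simp only [oddCount, List.countP_map]
    exact List.countP_congr fun x _ => by simp [flipParity_mod_two_eq_one_iff]
  have hsplit := s.length_eq_countP_add_countP (fun x => decide (x % 2 = 1))
  simp only [decide_eq_true_eq] at hsplit
  rw [hflip, oddCount]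
  omega

lemma MemN.map_flipParity {n k : ℕ} {l s : List ℕ} (h : MemN n k l s)
    (hs : IsPrimitiveWord s) : MemN n k l (s.map flipParity) := by
  obtain ⟨hlen, hlt, hcount, -⟩ := h
  have hinj := flipParity_involutive.injective
  refine ⟨by simpa using hlen, ?_, fun t ht => ?_, Or.inl (hs.map hinj)⟩
  · simp only [List.mem_map, forall_exists_index, and_imp, forall_apply_eq_imp_iff₂]
    exact fun a ha => flipParity_lt_two_mul (hlt a ha)
  · rw [← hcount t ht, ← List.count_map_of_injective s _ hinj (2 * t),
      ← List.count_map_of_injective s _ hinj (2 * t + 1), flipParity_two_mul,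
      flipParity_two_mul_add_one, Nat.add_comm]

def flipNecklace : Necklace → Necklace :=
  Quotient.map (List.map flipParity) fun _ _ h => h.map flipParity

lemma flipNecklace_involutive : Function.Involutive flipNecklace := by
  rintro ⟨s⟩
  change Quotient.mk _ ((s.map flipParity).map flipParity) = Quotient.mk _ s
  rw [List.map_map, flipParity_involutive.comp_self, List.map_id]

def MemLbar (n k : ℕ) (l : List ℕ) (m : ℕ) (x : Necklace) : Prop :=
  ∃ s : List ℕ, Quotient.mk (List.IsRotated.setoid ℕ) s = x ∧
    MemN n k l s ∧ oddCount s = m ∧ IsPrimitiveWord s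

lemma MemLbar.flipNecklace {n k m : ℕ} {l : List ℕ} {x : Necklace} (hx : MemLbar n k l m x) :
    MemLbar n k l (n - m) (flipNecklace x) := by
  obtain ⟨s, rfl, hmem, rfl, hs⟩ := hx
  refine ⟨s.map flipParity, rfl, hmem.map_flipParity hs, ?_, hs.map flipParity_involutive.injective⟩
  rw [oddCount_map_flipParity, hmem.1]

lemma memLbar_flipNecklace_iff {n k m : ℕ} {l : List ℕ} (hm : m ≤ n) (x : Necklace) :
    MemLbar n k l (n - m) (flipNecklace x) ↔ MemLbar n k l m x := by
  refine ⟨fun hx => ?_, MemLbar.flipNecklace⟩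
  simpa [Nat.sub_sub_self hm, flipNecklace_involutive x] using hx.flipNecklace

theorem cardLbar_symm_general (n k m : ℕ) (l : List ℕ) (hm : m ≤ n) :
    cardLbar n k l m = cardLbar n k l (n - m) :=
  Nat.card_congr <| (flipNecklace_involutive.toPerm _).subtypeEquiv fun x =>
    (memLbar_flipNecklace_iff hm x).symm

/-- For every composition `λ` of `n` and every `0 ≤ m ≤ n`, `L̄_λ(m) = L̄_λ(n-m)`. -/
theorem cardLbar_symm (n k m : ℕ) (l : List ℕ)
    (hk : l.length = k) (hpos : ∀ x ∈ l, 0 < x) (hsum : l.sum = n) (hm : m ≤ n) :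
    cardLbar n k l m = cardLbar n k l (n - m) :=
  cardLbar_symm_general n k m l hm
end

section
/- For all integers d, k ≥ 1, Σ_{i=1}^{k} (−1)^{i+k} · C(d·i, k) · C(k, i) = d^k, where C(a, b) denotes the binomial coefficient. -/
open Polynomial

/-- For all integers `d, k ≥ 1`, `∑_{i=1}^{k} (-1)^{i+k} · C(d·i, k) · C(k, i) = d^k`. -/
theorem alternating_sum_choose_eq_pow (d k : ℕ) (hd : 1 ≤ d) (hk : 1 ≤ k) :
    ∑ i ∈ Finset.Icc 1 k, (-1 : ℤ) ^ (i + k) * ((d * i).choose k : ℤ) * (k.choose i : ℤ)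
      = (d : ℤ) ^ k := by
  set p : ℤ[X] := (1 + X) ^ d - 1 with hp
  have hp0 : p.coeff 0 = 0 := by simp [hp, coeff_one_add_X_pow]
  have hfac : p = X * p.divX := by
    conv_lhs => rw [← X_mul_divX_add p]
    rw [hp0]; simp
  have hq0 : p.divX.coeff 0 = (d : ℤ) := by
    rw [coeff_divX]; simp [hp, coeff_one_add_X_pow, Polynomial.coeff_one]
  have key : (p ^ k).coeff k = (d : ℤ) ^ k := by
    rw [hfac, mul_pow]
    have := coeff_X_pow_mul (p.divX ^ k) k 0
    rw [zero_add] at this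
    rw [this, ← constantCoeff_apply, map_pow, constantCoeff_apply, hq0]
  have expand : (p ^ k).coeff k
      = ∑ i ∈ Finset.range (k + 1), (-1 : ℤ) ^ (i + k) * ((d * i).choose k : ℤ) * (k.choose i : ℤ) := by
    rw [hp, sub_pow, finset_sum_coeff]
    refine Finset.sum_congr rfl fun i _ => ?_
    rw [one_pow, mul_one, ← pow_mul]
    have : ((-1 : ℤ[X]) ^ (i + k) * (1 + X) ^ (d * i) * (k.choose i : ℤ[X]))
        = C ((-1 : ℤ) ^ (i + k) * (k.choose i : ℤ)) * (1 + X) ^ (d * i) := by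
      simp only [map_mul, map_pow, map_neg, map_one, map_natCast]
      ring
    rw [this, coeff_C_mul, coeff_one_add_X_pow]
    ring
  rw [← key, expand]
  rw [Finset.sum_range_succ' _ k]
  have h0 : (-1 : ℤ) ^ (0 + k) * ((d * 0).choose k : ℤ) * (k.choose 0 : ℤ) = 0 := by
    simp [Nat.choose_eq_zero_of_lt hk]
  rw [h0, add_zero]
  rw [← Finset.Ico_add_one_right_eq_Icc, Finset.sum_Ico_eq_sum_range]
  norm_num
  exact Finset.sum_congr rfl fun i _ => by rw [add_comm 1 i]
end

section
/- Let g = (1 2 ⋯ n) ∈ S_n, let H = ⟨g⟩, let ζ ∈ ℂ be a primitive n-th root of unity, and define ψ : S_n → ℂ by ψ(g^i) = ζ^i for 0 ≤ i < n and ψ(σ) = 0 for σ ∉ H. Define χ : S_n → ℂ by χ(τ) = (1/n) · Σ_{σ ∈ S_n} ψ(σ⁻¹τσ) (the character of the representation of S_n induced from the linear representation ψ of H). Then for every τ ∈ S_n: if τ has cycle type (d^k) (i.e. exactly k cycles, each of length d, with dk = n) then χ(τ) = (k−1)!·d^{k−1}·μ(d), and if the cycle type of τ is not of the form (d^k) then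 χ(τ) = 0. -/
/-!
Counting the `σ` with `σ⁻¹ τ σ = gⁱ` turns the defining sum into
`χ(τ) = |C(τ)| / n · ∑ ζⁱ`, summed over the `i < n` for which `gⁱ` is conjugate to `τ`.
Since `g` is an `n`-cycle, no power `gʲ ≠ 1` has a fixed point, so all cycles of `gⁱ` have
length `orderOf gⁱ = orderOf ζⁱ`. Hence `gⁱ` is conjugate to `τ` of cycle type `(d^k)` exactly
when `ζⁱ` is a primitive `d`-th root of unity, and is never conjugate to a `τ` of any other
cycle type. Möbius inversion of `∑_{e ∣ m} ∑_{ξ primitive e-th root} ξ = [m = 1]` shows that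
the primitive `d`-th roots of unity sum to `μ(d)`, and `|C(τ)| = d^k k!`.
-/

/-- The full cycle type of a permutation of `Fin n`: the multiset of its cycle lengths,
including fixed points as cycles of length `1`. -/
def fullCycleType {n : ℕ} (τ : Equiv.Perm (Fin n)) : Multiset ℕ :=
  τ.cycleType + Multiset.replicate (n - τ.support.card) 1

open Finset Equiv

namespace Equiv.Perm

variable {α : Type*} [Fintype α] [DecidableEq α]

theorem exists_pow_apply_eq_self_of_mem_cycleType {σ : Perm α} {c : ℕ}
    (hc : c ∈ σ.cycleType) : ∃ x, σ x ≠ x ∧ (σ ^ c) x = x := by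
  rw [cycleType_def, Multiset.mem_map] at hc
  obtain ⟨f, hf, rfl⟩ := hc
  obtain ⟨hcycle, hfσ⟩ := mem_cycleFactorsFinset_iff.1 hf
  obtain ⟨x, hx⟩ := hcycle.nonempty_support
  refine ⟨x, hfσ x hx ▸ mem_support.1 hx, ?_⟩
  rw [← cycleOf_pow_apply_self, ← cycle_is_cycleOf hx hf, Function.comp_apply,
    ← hcycle.orderOf, pow_orderOf_eq_one, one_apply]

/-- The hypothesis says that `⟨σ⟩` acts freely, so every cycle of `σ` has length `orderOf σ`. -/
theorem parts_partition_eq_replicate_of_pow_apply_eq_self {σ : Perm α}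
    (hfree : ∀ (k : ℕ) (x : α), (σ ^ k) x = x → σ ^ k = 1) :
    σ.partition.parts = Multiset.replicate (Fintype.card α / orderOf σ) (orderOf σ) := by
  rcases eq_or_ne σ 1 with rfl | hσ
  · simp [parts_partition]
  have hsupport : σ.support = univ :=
    eq_univ_of_forall fun x => mem_support.2 fun hx => hσ (by simpa using hfree 1 x (by simpa))
  have hcycles : σ.cycleType = Multiset.replicate (Multiset.card σ.cycleType) (orderOf σ) :=
    Multiset.eq_replicate_card.2 fun c hc => by
      obtain ⟨x, -, hx⟩ := exists_pow_apply_eq_self_of_mem_cycleType hc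
      exact Nat.dvd_antisymm (dvd_of_mem_cycleType hc) (orderOf_dvd_of_pow_eq_one (hfree c x hx))
  have hcard : Multiset.card σ.cycleType * orderOf σ = Fintype.card α := by
    rw [← card_univ, ← hsupport, ← sum_cycleType, hcycles, Multiset.sum_replicate,
      smul_eq_mul, Multiset.card_replicate]
  rw [parts_partition, hsupport, card_univ, Nat.sub_self, Multiset.replicate_zero, add_zero,
    ← hcard, Nat.mul_div_cancel _ (orderOf_pos σ), ← hcycles]

theorem nat_card_centralizer_of_parts_partition_eq_replicate {σ : Perm α} {k d : ℕ}
    (h : σ.partition.parts = Multiset.replicate k d) :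
    Nat.card (Subgroup.centralizer {σ}) = d ^ k * k.factorial := by
  have hcard : Fintype.card α = k * d := by
    rw [← σ.partition.parts_sum, h, Multiset.sum_replicate, smul_eq_mul]
  rw [nat_card_centralizer, ← filter_parts_partition_eq_cycleType, h]
  rcases Nat.eq_zero_or_pos k with rfl | hk
  · simp [hcard]
  obtain rfl | hd : d = 1 ∨ 2 ≤ d := by
    have := σ.partition.parts_pos (h ▸ Multiset.mem_replicate.2 ⟨hk.ne', rfl⟩)
    omega
  · rw [Multiset.filter_eq_nil.2 fun a ha => by simp [Multiset.eq_of_mem_replicate ha]]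
    simp [hcard]
  · rw [Multiset.filter_eq_self.2 fun a ha => Multiset.eq_of_mem_replicate ha ▸ hd]
    simp [hcard, Multiset.toFinset_replicate, hk.ne']

end Equiv.Perm

section ConjugationSums

variable {G M : Type*} [Group G] [Fintype G] [DecidableEq G] [AddCommMonoid M]

theorem card_filter_inv_mul_mul_eq (τ ρ : G) :
    #{σ | σ⁻¹ * τ * σ = ρ} =
      if IsConj τ ρ then Nat.card (Subgroup.centralizer {τ}) else 0 := by
  split_ifs with hconj
  · obtain ⟨c, rfl⟩ := isConj_iff.1 hconj
    rw [← Fintype.card_subtype, ← Nat.card_eq_fintype_card]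
    refine Nat.card_congr <| (Equiv.mulRight c).subtypeEquiv fun σ => ?_
    rw [Equiv.coe_mulRight, Subgroup.mem_centralizer_singleton_iff]
    constructor <;> intro h
    · calc σ * c * τ = σ * (c * τ * c⁻¹) * c := by group
        _ = τ * (σ * c) := by rw [← h]; group
    · calc σ⁻¹ * τ * σ = σ⁻¹ * (τ * (σ * c)) * c⁻¹ := by group
        _ = c * τ * c⁻¹ := by rw [← h]; group
  · exact card_eq_zero.2 <| filter_eq_empty_iff.2 fun σ _ hσ =>
      hconj (isConj_iff.2 ⟨σ⁻¹, by simpa [mul_assoc] using hσ⟩)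

theorem sum_inv_mul_mul_eq_card_centralizer_smul (τ : G) (f : G → M) :
    ∑ σ, f (σ⁻¹ * τ * σ) =
      Nat.card (Subgroup.centralizer {τ}) • ∑ ρ with IsConj τ ρ, f ρ := by
  rw [Finset.sum_comp, sum_subset (subset_univ _) fun ρ _ hρ => ?_]
  · simp_rw [card_filter_inv_mul_mul_eq, ite_smul, zero_smul, ← sum_filter, smul_sum]
  · rw [card_eq_zero.2 <| filter_eq_empty_iff.2 fun σ _ h =>
      hρ (mem_image.2 ⟨σ, mem_univ σ, h⟩), zero_smul]

theorem sum_eq_sum_range_orderOf_pow {g : G} {f : G → M}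
    (hf : ∀ x ∉ Subgroup.zpowers g, f x = 0) :
    ∑ x, f x = ∑ i ∈ range (orderOf g), f (g ^ i) := by
  rw [← sum_image fun i hi j hj hij =>
    pow_injOn_Iio_orderOf (by simpa using hi) (by simpa using hj) hij]
  exact (sum_subset (subset_univ _) fun x _ hx =>
    hf x (by rwa [mem_zpowers_iff_mem_range_orderOf])).symm

theorem sum_inv_mul_mul_eq_card_centralizer_smul_sum_pow {g : G} {f : G → M}
    (hf : ∀ x ∉ Subgroup.zpowers g, f x = 0) (τ : G) :
    ∑ σ, f (σ⁻¹ * τ * σ) =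
      Nat.card (Subgroup.centralizer {τ}) •
        ∑ i ∈ range (orderOf g) with IsConj τ (g ^ i), f (g ^ i) := by
  rw [sum_inv_mul_mul_eq_card_centralizer_smul, sum_filter, sum_filter,
    sum_eq_sum_range_orderOf_pow fun x hx => by simp [hf x hx]]

end ConjugationSums

namespace IsPrimitiveRoot

open Polynomial

variable {R : Type*} [CommRing R] [IsDomain R]

theorem sum_nthRootsFinset_one {ω : R} {m : ℕ} (hω : IsPrimitiveRoot ω m) :
    ∑ ξ ∈ nthRootsFinset m (1 : R), ξ = if m = 1 then 1 else 0 := by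
  classical
  rw [nthRootsFinset_def, sum_eq_multiset_sum, Multiset.toFinset_val,
    Multiset.dedup_eq_self.2 hω.nthRoots_one_nodup, Multiset.map_id', hω.nthRoots_eq (one_pow m),
    ← range_val, ← sum_eq_multiset_sum]
  simp_rw [mul_one]
  rcases lt_trichotomy m 1 with hm | rfl | hm
  · simp [Nat.lt_one_iff.1 hm]
  · simp
  · rw [hω.geom_sum_eq_zero hm, if_neg hm.ne']

theorem sum_primitiveRoots_eq_moebius {ζ : R} {n : ℕ} (hζ : IsPrimitiveRoot ζ n) (hn : 0 < n) :
    ∑ ξ ∈ primitiveRoots n R, ξ = ArithmeticFunction.moebius n := by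
  classical
  set s : Set ℕ := {m | m ∣ n}
  have hs : ∀ a b, a ∣ b → b ∈ s → a ∈ s := fun a b hab hb => hab.trans hb
  have hroots : ∀ m > 0, m ∈ s →
      ∑ e ∈ m.divisors, ∑ ξ ∈ primitiveRoots e R, ξ = if m = 1 then 1 else 0 := by
    rintro m - ⟨k, rfl⟩
    rw [← sum_biUnion fun a _ b _ hab => disjoint hab, ← nthRoots_one_eq_biUnion_primitiveRoots,
      (hζ.pow hn (mul_comm m k)).sum_nthRootsFinset_one]
  have hmoebius : ∀ m > 0, m ∈ s →
      ∑ e ∈ m.divisors, (ArithmeticFunction.moebius e : R) = if m = 1 then 1 else 0 := by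
    intro m _ _
    have := congrArg (· m) (ArithmeticFunction.coe_moebius_mul_coe_zeta (R := R))
    simp only [ArithmeticFunction.coe_mul_zeta_apply, ArithmeticFunction.one_apply] at this
    rw [← this]
    simp
  rw [← (ArithmeticFunction.sum_eq_iff_sum_mul_moebius_eq_on s hs).1 hroots n hn dvd_rfl,
    (ArithmeticFunction.sum_eq_iff_sum_mul_moebius_eq_on s hs).1 hmoebius n hn dvd_rfl]

theorem sum_pow_filter_orderOf_eq {ζ : R} {n d : ℕ} (hζ : IsPrimitiveRoot ζ n) (hn : 0 < n)
    (hd : d ∣ n) :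
    ∑ i ∈ range n with orderOf (ζ ^ i) = d, ζ ^ i = ∑ ξ ∈ primitiveRoots d R, ξ := by
  have hd0 : 0 < d := Nat.pos_of_dvd_of_pos hd hn
  have : NeZero n := ⟨hn.ne'⟩
  refine sum_nbij (ζ ^ ·) (fun i hi => ?_) (fun i hi j hj hij => ?_) (fun ξ hξ => ?_)
    fun _ _ => rfl
  · rw [mem_filter] at hi
    rw [mem_primitiveRoots hd0, IsPrimitiveRoot.iff_orderOf, hi.2]
  · simp only [coe_filter, mem_range, Set.mem_ofPred_eq] at hi hj
    exact hζ.pow_inj hi.1 hj.1 hij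
  · rw [mem_coe, mem_primitiveRoots hd0] at hξ
    obtain ⟨i, hi, rfl⟩ := hζ.eq_pow_of_pow_eq_one ((hξ.pow_eq_one_iff_dvd n).2 hd)
    exact ⟨i, by simp [hi, hξ.eq_orderOf], rfl⟩

end IsPrimitiveRoot

theorem orderOf_pow_eq_of_orderOf_eq {M N : Type*} [Monoid M] [Monoid N] {x : M} {y : N}
    (h : orderOf x = orderOf y) (i : ℕ) : orderOf (x ^ i) = orderOf (y ^ i) :=
  orderOf_eq_orderOf_iff.2 fun m => by
    rw [← pow_mul, ← pow_mul, ← orderOf_dvd_iff_pow_eq_one, ← orderOf_dvd_iff_pow_eq_one, h]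

theorem fullCycleType_eq_parts_partition {n : ℕ} (τ : Perm (Fin n)) :
    fullCycleType τ = τ.partition.parts := by
  rw [fullCycleType, Perm.parts_partition, Fintype.card_fin]

theorem isConj_iff_fullCycleType_eq {n : ℕ} {σ τ : Perm (Fin n)} :
    IsConj σ τ ↔ fullCycleType σ = fullCycleType τ := by
  rw [Perm.partition_eq_of_isConj, Nat.Partition.ext_iff, fullCycleType_eq_parts_partition,
    fullCycleType_eq_parts_partition]

theorem orderOf_finRotate {n : ℕ} (hn : 0 < n) : orderOf (finRotate n) = n := by
  obtain _ | _ | n := n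
  · omega
  · rw [finRotate_one, ← Perm.one_def, orderOf_one]
  · rw [isCycle_finRotate.orderOf, support_finRotate, card_univ, Fintype.card_fin]

theorem finRotate_pow_eq_one_of_apply_eq_self {n j : ℕ} {x : Fin n}
    (h : (finRotate n ^ j) x = x) : finRotate n ^ j = 1 := by
  obtain _ | _ | n := n
  · exact x.elim0
  · rw [finRotate_one, ← Perm.one_def, one_pow]
  · exact (isCycle_finRotate.pow_eq_one_iff' (by simp)).2 h

theorem fullCycleType_finRotate_pow {n : ℕ} (i : ℕ) :
    fullCycleType (finRotate n ^ i) =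
      Multiset.replicate (n / orderOf (finRotate n ^ i)) (orderOf (finRotate n ^ i)) := by
  rw [fullCycleType_eq_parts_partition, Perm.parts_partition_eq_replicate_of_pow_apply_eq_self,
    Fintype.card_fin]
  intro k x hx
  rw [← pow_mul] at hx ⊢
  exact finRotate_pow_eq_one_of_apply_eq_self hx

theorem isConj_finRotate_pow_iff {n d k : ℕ} (hn : 0 < n) (hdk : d * k = n)
    {τ : Perm (Fin n)} (hτ : fullCycleType τ = Multiset.replicate k d) (i : ℕ) :
    IsConj τ (finRotate n ^ i) ↔ orderOf (finRotate n ^ i) = d := by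
  obtain ⟨hd, hk⟩ : 0 < d ∧ 0 < k := CanonicallyOrderedAdd.mul_pos.1 (hdk ▸ hn)
  rw [isConj_iff_fullCycleType_eq, hτ, fullCycleType_finRotate_pow]
  constructor
  · intro h
    exact (Multiset.eq_of_mem_replicate (h ▸ Multiset.mem_replicate.2 ⟨hk.ne', rfl⟩)).symm
  · intro h
    rw [h, Nat.div_eq_of_eq_mul_left hd (by rw [← hdk, mul_comm])]

/-- Let `g = (1 2 ⋯ n)`, `H = ⟨g⟩`, `ζ` a primitive `n`-th root of unity, and `ψ` the class
function with `ψ(gⁱ) = ζⁱ` for `0 ≤ i < n` and `ψ(σ) = 0` for `σ ∉ H`. Let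
`χ(τ) = (1/n)·∑_{σ ∈ S_n} ψ(σ⁻¹τσ)` be the induced character. Then `χ(τ) = (k-1)!·d^{k-1}·μ(d)`
if `τ` has cycle type `(d^k)` (with `d·k = n`), and `χ(τ) = 0` if the cycle type of `τ` is not
of this form. -/
theorem induced_character_values (n : ℕ) (hn : 0 < n) (ζ : ℂ) (hζ : IsPrimitiveRoot ζ n)
    (ψ χ : Equiv.Perm (Fin n) → ℂ)
    (hψ₁ : ∀ i : ℕ, i < n → ψ (finRotate n ^ i) = ζ ^ i)
    (hψ₂ : ∀ σ : Equiv.Perm (Fin n), σ ∉ Subgroup.zpowers (finRotate n) → ψ σ = 0)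
    (hχ : ∀ τ : Equiv.Perm (Fin n),
      χ τ = (1 / (n : ℂ)) * ∑ σ : Equiv.Perm (Fin n), ψ (σ⁻¹ * τ * σ)) :
    ∀ τ : Equiv.Perm (Fin n),
      (∀ d k : ℕ, d * k = n → fullCycleType τ = Multiset.replicate k d →
        χ τ = ((k - 1).factorial : ℂ) * (d : ℂ) ^ (k - 1) *
          ((ArithmeticFunction.moebius d : ℤ) : ℂ)) ∧
      ((¬ ∃ d k : ℕ, fullCycleType τ = Multiset.replicate k d) → χ τ = 0) := by
  classical
  intro τ
  have hsum : ∑ σ, ψ (σ⁻¹ * τ * σ) = Nat.card (Subgroup.centralizer {τ}) *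
      ∑ i ∈ range n with IsConj τ (finRotate n ^ i), ζ ^ i := by
    rw [sum_inv_mul_mul_eq_card_centralizer_smul_sum_pow hψ₂, orderOf_finRotate hn, nsmul_eq_mul]
    exact congrArg _ (sum_congr rfl fun i hi => hψ₁ i (mem_range.1 (mem_filter.1 hi).1))
  refine ⟨fun d k hdk hτ => ?_, fun hτ => ?_⟩
  · obtain ⟨hd, hk⟩ : 0 < d ∧ 0 < k := CanonicallyOrderedAdd.mul_pos.1 (hdk ▸ hn)
    have hconj (i : ℕ) : IsConj τ (finRotate n ^ i) ↔ orderOf (ζ ^ i) = d := by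
      rw [isConj_finRotate_pow_iff hn hdk hτ,
        orderOf_pow_eq_of_orderOf_eq ((orderOf_finRotate hn).trans hζ.eq_orderOf)]
    rw [hχ, hsum, filter_congr fun i _ => hconj i,
      hζ.sum_pow_filter_orderOf_eq hn ⟨k, hdk.symm⟩,
      (hζ.pow hn (by rw [← hdk, mul_comm])).sum_primitiveRoots_eq_moebius hd,
      Perm.nat_card_centralizer_of_parts_partition_eq_replicate
        (fullCycleType_eq_parts_partition τ ▸ hτ)]
    obtain ⟨k, rfl⟩ := Nat.exists_eq_add_one_of_ne_zero hk.ne'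
    subst hdk
    have : (d : ℂ) ≠ 0 := by exact_mod_cast hd.ne'
    push_cast [Nat.factorial_succ, Nat.add_sub_cancel]
    field_simp
    ring
  · rw [hχ, hsum, filter_false_of_mem fun i _ h => hτ ⟨_, _,
      (isConj_iff_fullCycleType_eq.1 h).trans (fullCycleType_finRotate_pow i)⟩,
      sum_empty, mul_zero, mul_zero]
end

section
/- Let λ = (λ₁, …, λ_k) be a composition of n. Then the signed sum over all λ-unimodal permutations π ∈ S_n of (−1)^{|Des(π) \ S(λ)|} equals n! if λ = (1^n) (i.e. every part equals 1), and equals 0 otherwise. -/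
/-- The one-line notation of a permutation of `Fin n`, as the list `[π 0, π 1, …, π (n-1)]`
of natural numbers (so the 1-indexed entry `π_j` of the paper is the list entry at index `j-1`). -/
def oneLine {n : ℕ} (π : Equiv.Perm (Fin n)) : List ℕ :=
  List.ofFn (fun i : Fin n => (π i : ℕ))

/-- The descent set of a permutation of `Fin n`, as the set of 1-indexed positions
`j ∈ {1,…,n-1}` with `π_j > π_{j+1}` in one-line notation. -/
def Des {n : ℕ} (π : Equiv.Perm (Fin n)) : Finset ℕ :=
  (Finset.Icc 1 (n - 1)).filter
    (fun j => (oneLine π).getD j 0 < (oneLine π).getD (j - 1) 0)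

/-- A list of naturals is unimodal: it increases strictly up to some peak position `m`
(0-indexed) and strictly decreases afterwards. -/
def ListUnimodal (w : List ℕ) : Prop :=
  ∃ m : ℕ, ∀ i : ℕ, i + 1 < w.length →
    (i < m → w.getD i 0 < w.getD (i + 1) 0) ∧ (m ≤ i → w.getD (i + 1) 0 < w.getD i 0)

/-- The set `S(λ)` of partial sums `λ₁, λ₁+λ₂, …, λ₁+⋯+λ_k` of a composition `λ`. -/
def partialSums (l : List ℕ) : Finset ℕ :=
  (Finset.range l.length).image (fun i => (l.take (i + 1)).sum)

/-- A permutation of `Fin n` is `λ`-unimodal if each consecutive segment of its one-line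
notation of length `λ_{i+1}` (starting after position `λ₁+⋯+λ_i`) is unimodal. -/
def IsLambdaUnimodal {n : ℕ} (l : List ℕ) (π : Equiv.Perm (Fin n)) : Prop :=
  ∀ i < l.length, ListUnimodal (((oneLine π).drop ((l.take i).sum)).take (l.getD i 0))

/-- A permutation of `Fin n` is cyclic if it consists of a single `n`-cycle, i.e. the
cyclic group it generates acts transitively. -/
def IsCyclicPerm {n : ℕ} (π : Equiv.Perm (Fin n)) : Prop :=
  ∀ x y : Fin n, ∃ j : ℕ, (π ^ j) x = y

namespace SSLU

/-- value of π at natural index j, or 0 out of range -/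
def pv {n : ℕ} (π : Equiv.Perm (Fin n)) (j : ℕ) : ℕ :=
  if h : j < n then (π ⟨j, h⟩ : ℕ) else 0

lemma getD_oneLine {n : ℕ} (π : Equiv.Perm (Fin n)) (j : ℕ) :
    (oneLine π).getD j 0 = pv π j := by
  unfold oneLine pv
  split
  · rename_i h
    rw [List.getD_eq_getElem _ _ (by simpa using h)]
    simp
  · rename_i h
    rw [List.getD_eq_default]
    simpa using Nat.le_of_not_lt h

lemma Des_eq {n : ℕ} (π : Equiv.Perm (Fin n)) :
    Des π = (Finset.Icc 1 (n-1)).filter (fun j => pv π j < pv π (j-1)) := by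
  unfold Des
  simp only [getD_oneLine]

lemma pv_inj {n : ℕ} (π : Equiv.Perm (Fin n)) {a b : ℕ} (ha : a < n) (hb : b < n)
    (hab : a ≠ b) : pv π a ≠ pv π b := by
  simp only [pv, dif_pos ha, dif_pos hb]
  intro h
  exact hab (by simpa [Fin.ext_iff] using π.injective (Fin.ext h))

lemma seg_length {n : ℕ} (π : Equiv.Perm (Fin n)) {s m : ℕ} (h : s + m ≤ n) :
    (((oneLine π).drop s).take m).length = m := by
  simp [oneLine]
  omega

lemma seg_getD {n : ℕ} (π : Equiv.Perm (Fin n)) {s m : ℕ} (h : s + m ≤ n)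
    {i : ℕ} (hi : i < m) :
    (((oneLine π).drop s).take m).getD i 0 = pv π (s + i) := by
  rw [List.getD_eq_getElem _ _ (by rw [seg_length π h]; exact hi)]
  simp only [List.getElem_take, List.getElem_drop, oneLine, List.getElem_ofFn, pv]
  rw [dif_pos (by omega)]

/-- threshold form of unimodality of the segment starting at `s` of length `m` -/
def Threshold {n : ℕ} (π : Equiv.Perm (Fin n)) (s m t : ℕ) : Prop :=
  ∀ j : ℕ, j + 1 < m →
    (j < t → pv π (s + j) < pv π (s + j + 1)) ∧ (t ≤ j → pv π (s + j + 1) < pv π (s + j))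

lemma unimodal_iff_threshold {n : ℕ} (π : Equiv.Perm (Fin n)) {s m : ℕ} (h : s + m ≤ n) :
    ListUnimodal (((oneLine π).drop s).take m) ↔ ∃ t, t ≤ m - 1 ∧ Threshold π s m t := by
  constructor
  · rintro ⟨q, hq⟩
    refine ⟨min q (m-1), by omega, fun j hj => ?_⟩
    have hj' : j + 1 < (((oneLine π).drop s).take m).length := by rw [seg_length π h]; exact hj
    have := hq j hj'
    rw [seg_getD π h (by omega), seg_getD π h (by omega), show s + (j+1) = s + j + 1 by omega] at this
    constructor
    · intro hlt; exact this.1 (by omega)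
    · intro hle; exact this.2 (by omega)
  · rintro ⟨t, _, ht⟩
    refine ⟨t, fun j hj => ?_⟩
    rw [seg_length π h] at hj
    have := ht j hj
    rw [seg_getD π h (by omega), seg_getD π h (by omega), show s + (j+1) = s + j + 1 by omega]
    exact this

lemma threshold_inc {n : ℕ} {π : Equiv.Perm (Fin n)} {s m t : ℕ}
    (ht : Threshold π s m t) : ∀ b, b ≤ t → b < m → pv π s ≤ pv π (s + b) := by
  intro b
  induction b with
  | zero => simp
  | succ b ih =>
    intro hbt hbm
    have h1 := (ht b (by omega)).1 (by omega)
    have h2 := ih (by omega) (by omega)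
    rw [show s + (b+1) = s + b + 1 from rfl]
    omega

lemma threshold_dec0 {n : ℕ} {π : Equiv.Perm (Fin n)} {s m : ℕ}
    (ht : Threshold π s m 0) : ∀ b, b < m → pv π (s + b) ≤ pv π s := by
  intro b
  induction b with
  | zero => simp
  | succ b ih =>
    intro hbm
    have h1 := (ht b (by omega)).2 (by omega)
    have h2 := ih (by omega)
    rw [show s + (b+1) = s + b + 1 from rfl]
    omega

lemma unimodal_congr {w w' : List ℕ} (hl : w.length = w'.length)
    (h : ∀ i < w.length, w.getD i 0 = w'.getD i 0) : ListUnimodal w → ListUnimodal w' := by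
  rintro ⟨q, hq⟩
  refine ⟨q, fun i hi => ?_⟩
  rw [← hl] at hi
  have := hq i hi
  rw [h i (by omega), h (i+1) (by omega)] at this
  exact this

/-- the rotation function on indices -/
def cf (p m j : ℕ) : ℕ :=
  if p ≤ j ∧ j < p + m then (if j + 1 = p + m then p else j + 1) else j

def cg (p m j : ℕ) : ℕ :=
  if p ≤ j ∧ j < p + m then (if j = p then p + m - 1 else j - 1) else j

lemma cg_cf (p m j : ℕ) (hm : 1 ≤ m) : cg p m (cf p m j) = j := by
  unfold cf cg; split_ifs <;> omega

lemma cf_cg (p m j : ℕ) (hm : 1 ≤ m) : cf p m (cg p m j) = j := by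
  unfold cf cg; split_ifs <;> omega

lemma cf_lt (p m j n : ℕ) (h : p + m ≤ n) (hj : j < n) : cf p m j < n := by
  unfold cf; split_ifs <;> omega

lemma cg_lt (p m j n : ℕ) (h : p + m ≤ n) (hm : 1 ≤ m) (hj : j < n) : cg p m j < n := by
  unfold cg; split_ifs <;> omega

/-- the cycle rotating the window `[p, p+m)` -/
def cyc (n p m : ℕ) (h : p + m ≤ n) (hm : 1 ≤ m) : Equiv.Perm (Fin n) where
  toFun := fun j => ⟨cf p m j, cf_lt p m j n h j.isLt⟩
  invFun := fun j => ⟨cg p m j, cg_lt p m j n h hm j.isLt⟩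
  left_inv := fun j => Fin.ext (cg_cf p m j hm)
  right_inv := fun j => Fin.ext (cf_cg p m j hm)

lemma pv_mul_cyc {n : ℕ} (π : Equiv.Perm (Fin n)) {p m : ℕ} (h : p + m ≤ n) (hm : 1 ≤ m)
    {j : ℕ} (hj : j < n) : pv (π * cyc n p m h hm) j = pv π (cf p m j) := by
  simp only [pv, dif_pos hj, dif_pos (cf_lt p m j n h hj)]
  rfl

lemma pv_mul_cyc_inv {n : ℕ} (π : Equiv.Perm (Fin n)) {p m : ℕ} (h : p + m ≤ n) (hm : 1 ≤ m)
    {j : ℕ} (hj : j < n) : pv (π * (cyc n p m h hm)⁻¹) j = pv π (cg p m j) := by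
  simp only [pv, dif_pos hj, dif_pos (cg_lt p m j n h hm hj)]
  rfl

lemma cf_out {p m j : ℕ} (h : j < p ∨ p + m ≤ j) : cf p m j = j := by
  unfold cf; split_ifs <;> omega

lemma cg_out {p m j : ℕ} (h : j < p ∨ p + m ≤ j) : cg p m j = j := by
  unfold cg; split_ifs <;> omega

lemma cf_mid {p m j : ℕ} (h1 : p ≤ j) (h2 : j + 1 < p + m) : cf p m j = j + 1 := by
  unfold cf; split_ifs <;> omega

lemma cf_last {p m : ℕ} (hm : 1 ≤ m) : cf p m (p + m - 1) = p := by
  unfold cf; split_ifs <;> omega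

lemma cg_first {p m : ℕ} (hm : 1 ≤ m) : cg p m p = p + m - 1 := by
  unfold cg; split_ifs <;> omega

lemma cg_mid {p m j : ℕ} (h1 : p < j) (h2 : j < p + m) : cg p m j = j - 1 := by
  unfold cg; split_ifs <;> omega

lemma sum_take_mono (l : List ℕ) {a b : ℕ} (h : a ≤ b) :
    (l.take a).sum ≤ (l.take b).sum := by
  conv_rhs => rw [← List.take_append_drop a (l.take b)]
  rw [List.sum_append, List.take_take, min_eq_left h]
  exact Nat.le_add_right _ _



section ZeroCase

variable {n : ℕ} {l : List ℕ} {i0 p m : ℕ}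

lemma hseg_le (hsum : l.sum = n) {i : ℕ} (hi : i < l.length) :
    (l.take i).sum + l.getD i 0 ≤ n := by
  rw [List.getD_eq_getElem l 0 hi, ← List.sum_take_succ l i hi]
  calc (l.take (i+1)).sum ≤ (l.take l.length).sum := sum_take_mono l (by omega)
  _ = n := by rw [List.take_length]; exact hsum

lemma zero_case [DecidablePred (fun π : Equiv.Perm (Fin n) => IsLambdaUnimodal l π)]
    (hsum : l.sum = n) (hi0 : i0 < l.length)
    (hp : (l.take i0).sum = p) (hm : l.getD i0 0 = m) (hm2 : 2 ≤ m) :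
    (∑ π ∈ Finset.univ.filter (fun π : Equiv.Perm (Fin n) => IsLambdaUnimodal l π),
      (-1 : ℤ) ^ (Des π \ partialSums l).card) = 0 := by
  have hpm : p + m ≤ n := by rw [← hp, ← hm]; exact hseg_le hsum hi0
  have hm1 : 1 ≤ m := by omega
  set c := cyc n p m hpm hm1 with hc
  set S := partialSums l with hS
  -- partial sum facts
  have hpmS : p + m ∈ S := by
    rw [hS]
    unfold partialSums
    refine Finset.mem_image.mpr ⟨i0, Finset.mem_range.mpr hi0, ?_⟩
    rw [List.sum_take_succ l i0 hi0, hp, ← List.getD_eq_getElem l 0 hi0, hm]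
  have hpS : p ≠ 0 → p ∈ S := by
    intro hp0
    have hi00 : i0 ≠ 0 := by rintro rfl; simp at hp; omega
    rw [hS]
    unfold partialSums
    refine Finset.mem_image.mpr ⟨i0 - 1, Finset.mem_range.mpr (by omega), ?_⟩
    rw [show i0 - 1 + 1 = i0 by omega, hp]
  have hSint : ∀ j, p < j → j < p + m → j ∉ S := by
    intro j h1 h2 hj
    rw [hS] at hj
    unfold partialSums at hj
    obtain ⟨a, ha, hsa⟩ := Finset.mem_image.mp hj
    rw [Finset.mem_range] at ha
    rcases le_or_gt (a+1) i0 with hcase | hcase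
    · have := sum_take_mono l hcase
      rw [hsa, hp] at this
      omega
    · have := sum_take_mono l (show i0 + 1 ≤ a + 1 by omega)
      rw [hsa, List.sum_take_succ l i0 hi0, hp, ← List.getD_eq_getElem l 0 hi0, hm] at this
      omega
  -- region key
  have hkey : ∀ j, 1 ≤ j → j ≤ n - 1 → j ∉ S → ¬(p + 1 ≤ j ∧ j ≤ p + m - 1) →
      ((j < p ∨ p + m ≤ j) ∧ (j - 1 < p ∨ p + m ≤ j - 1)) := by
    intro j h1 h2 hjS hint
    have hne1 : j ≠ p + m := by rintro rfl; exact hjS hpmS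
    have hne2 : p = 0 ∨ j ≠ p := by
      by_cases h : p = 0
      · exact Or.inl h
      · exact Or.inr (by rintro rfl; exact hjS (hpS h))
    omega
  -- outside part is stable
  have hB : ∀ π π' : Equiv.Perm (Fin n),
      (∀ j, j < n → (j < p ∨ p + m ≤ j) → pv π' j = pv π j) →
      (Des π' \ S) \ Finset.Icc (p+1) (p+m-1) = (Des π \ S) \ Finset.Icc (p+1) (p+m-1) := by
    intro π π' hagree
    ext j
    simp only [Finset.mem_sdiff, Des_eq, Finset.mem_filter, Finset.mem_Icc]
    constructor
    · rintro ⟨⟨⟨⟨hj1, hj2⟩, hdesc⟩, hjS⟩, hjint⟩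
      have hreg := hkey j hj1 hj2 hjS hjint
      rw [hagree j (by omega) hreg.1, hagree (j-1) (by omega) hreg.2] at hdesc
      exact ⟨⟨⟨⟨hj1, hj2⟩, hdesc⟩, hjS⟩, hjint⟩
    · rintro ⟨⟨⟨⟨hj1, hj2⟩, hdesc⟩, hjS⟩, hjint⟩
      have hreg := hkey j hj1 hj2 hjS hjint
      rw [← hagree j (by omega) hreg.1, ← hagree (j-1) (by omega) hreg.2] at hdesc
      exact ⟨⟨⟨⟨hj1, hj2⟩, hdesc⟩, hjS⟩, hjint⟩
  -- interior part determined by threshold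
  have hInt : ∀ (π : Equiv.Perm (Fin n)) (t : ℕ), t ≤ m - 1 → Threshold π p m t →
      (Des π \ S) ∩ Finset.Icc (p+1) (p+m-1) = Finset.Icc (p+t+1) (p+m-1) := by
    intro π t htm hth
    ext j
    simp only [Finset.mem_inter, Finset.mem_sdiff, Des_eq, Finset.mem_filter, Finset.mem_Icc]
    constructor
    · rintro ⟨⟨⟨⟨hj1, hj2⟩, hdesc⟩, hjS⟩, hjint1, hjint2⟩
      rw [show j = p + (j - p - 1) + 1 by omega] at hdesc
      rw [show p + (j - p - 1) + 1 - 1 = p + (j - p - 1) by omega] at hdesc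
      have hta : t ≤ j - p - 1 := by
        by_contra hlt
        have := (hth (j - p - 1) (by omega)).1 (by omega)
        omega
      omega
    · rintro ⟨hj1, hj2⟩
      have hdesc := (hth (j - p - 1) (by omega)).2 (by omega)
      rw [show p + (j - p - 1) + 1 = j by omega, show p + (j - p - 1) = j - 1 by omega] at hdesc
      exact ⟨⟨⟨⟨by omega, by omega⟩, hdesc⟩, hSint j (by omega) (by omega)⟩, by omega, by omega⟩
  -- membership transfer
  have hmem : ∀ π π' : Equiv.Perm (Fin n), IsLambdaUnimodal l π →
      (∀ j, j < n → (j < p ∨ p + m ≤ j) → pv π' j = pv π j) →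
      (∃ t, t ≤ m - 1 ∧ Threshold π' p m t) → IsLambdaUnimodal l π' := by
    intro π π' hπ hagree hth i hi
    by_cases hii : i = i0
    · subst hii
      rw [hp, hm]
      exact (unimodal_iff_threshold π' hpm).mpr hth
    · have hsegle : (l.take i).sum + l.getD i 0 ≤ n := hseg_le hsum hi
      refine unimodal_congr ?_ ?_ (hπ i hi)
      · rw [seg_length π hsegle, seg_length π' hsegle]
      · intro j hj
        rw [seg_length π hsegle] at hj
        rw [seg_getD π hsegle hj, seg_getD π' hsegle hj]
        refine (hagree _ (by omega) ?_).symm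
        rcases lt_or_gt_of_ne hii with hlt | hgt
        · left
          have := sum_take_mono l (show i + 1 ≤ i0 by omega)
          rw [List.sum_take_succ l i hi, ← List.getD_eq_getElem l 0 hi, hp] at this
          omega
        · right
          have := sum_take_mono l (show i0 + 1 ≤ i by omega)
          rw [List.sum_take_succ l i0 hi0, hp, ← List.getD_eq_getElem l 0 hi0, hm] at this
          omega
  -- common facts
  have hpn : p < n := by omega
  have hpmn : p + m - 1 < n := by omega
  have hthm : ∀ π : Equiv.Perm (Fin n), IsLambdaUnimodal l π →
      ∃ t, t ≤ m - 1 ∧ Threshold π p m t := by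
    intro π hπ
    have h := hπ i0 hi0
    rw [hp, hm] at h
    exact (unimodal_iff_threshold π hpm).mp h
  have hagc : ∀ π : Equiv.Perm (Fin n), ∀ j, j < n → (j < p ∨ p + m ≤ j) →
      pv (π * c) j = pv π j := by
    intro π j hj hreg
    rw [hc, pv_mul_cyc π hpm hm1 hj, cf_out hreg]
  have hagci : ∀ π : Equiv.Perm (Fin n), ∀ j, j < n → (j < p ∨ p + m ≤ j) →
      pv (π * c⁻¹) j = pv π j := by
    intro π j hj hreg
    rw [hc, pv_mul_cyc_inv π hpm hm1 hj, cg_out hreg]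
  have htA : ∀ (π : Equiv.Perm (Fin n)) t, Threshold π p m t →
      pv π p < pv π (p+m-1) → 1 ≤ t := by
    intro π t hth hA
    by_contra h0
    have ht0 : Threshold π p m 0 := by rwa [show t = 0 by omega] at hth
    have := threshold_dec0 ht0 (m-1) (by omega)
    rw [show p + (m-1) = p+m-1 by omega] at this
    omega
  have htNA : ∀ (π : Equiv.Perm (Fin n)) t, t ≤ m-1 → Threshold π p m t →
      ¬(pv π p < pv π (p+m-1)) → t ≤ m-2 := by
    intro π t htm hth hA
    by_contra h0
    have := threshold_inc hth (m-1) (by omega) (by omega)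
    rw [show p + (m-1) = p+m-1 by omega] at this
    have hne := pv_inj π hpn hpmn (by omega)
    omega
  have hthc : ∀ (π : Equiv.Perm (Fin n)) t, 1 ≤ t → t ≤ m-1 → Threshold π p m t →
      pv π p < pv π (p+m-1) → Threshold (π * c) p m (t-1) := by
    intro π t ht1 htm hth hA j hj
    constructor
    · intro hjt
      rw [hc, pv_mul_cyc π hpm hm1 (by omega), pv_mul_cyc π hpm hm1 (by omega),
          cf_mid (j := p + j) (by omega) (by omega),
          cf_mid (j := p + j + 1) (by omega) (by omega)]
      have h := (hth (j+1) (by omega)).1 (by omega)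
      rw [show p+(j+1) = p+j+1 by omega] at h
      exact h
    · intro hjt
      rcases eq_or_lt_of_le (show j+2 ≤ m by omega) with hcase | hcase
      · rw [hc, pv_mul_cyc π hpm hm1 (by omega), pv_mul_cyc π hpm hm1 (by omega),
            cf_mid (j := p + j) (by omega) (by omega),
            show p+j+1 = p+m-1 by omega, cf_last hm1]
        exact hA
      · rw [hc, pv_mul_cyc π hpm hm1 (by omega), pv_mul_cyc π hpm hm1 (by omega),
            cf_mid (j := p + j) (by omega) (by omega),
            cf_mid (j := p + j + 1) (by omega) (by omega)]
        have h := (hth (j+1) (by omega)).2 (by omega)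
        rw [show p+(j+1) = p+j+1 by omega] at h
        exact h
  have hthci : ∀ (π : Equiv.Perm (Fin n)) t, t ≤ m-2 → Threshold π p m t →
      ¬(pv π p < pv π (p+m-1)) → Threshold (π * c⁻¹) p m (t+1) := by
    intro π t htm hth hA j hj
    have hstrict : pv π (p+m-1) < pv π p := by
      have hne := pv_inj π hpmn hpn (by omega)
      omega
    constructor
    · intro hjt
      rcases Nat.eq_zero_or_pos j with rfl | hj1
      · rw [hc, pv_mul_cyc_inv π hpm hm1 (by omega), pv_mul_cyc_inv π hpm hm1 (by omega),
            show p + 0 = p by omega, cg_first hm1,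
            cg_mid (j := p + 1) (by omega) (by omega), show p+1-1 = p by omega]
        exact hstrict
      · rw [hc, pv_mul_cyc_inv π hpm hm1 (by omega), pv_mul_cyc_inv π hpm hm1 (by omega),
            cg_mid (j := p + j) (by omega) (by omega),
            cg_mid (j := p + j + 1) (by omega) (by omega)]
        have h := (hth (j-1) (by omega)).1 (by omega)
        rw [show p+(j-1) = p+j-1 by omega, show p+j-1+1 = p+j+1-1 by omega] at h
        exact h
    · intro hjt
      rw [hc, pv_mul_cyc_inv π hpm hm1 (by omega), pv_mul_cyc_inv π hpm hm1 (by omega),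
          cg_mid (j := p + j) (by omega) (by omega),
          cg_mid (j := p + j + 1) (by omega) (by omega)]
      have h := (hth (j-1) (by omega)).2 (by omega)
      rw [show p+(j-1) = p+j-1 by omega, show p+j-1+1 = p+j+1-1 by omega] at h
      exact h
  -- now the involution
  apply Finset.sum_involution
    (fun π _ => if pv π p < pv π (p+m-1) then π * c else π * c⁻¹)
  case g_mem =>
    intro π ha
    rw [Finset.mem_filter] at ha ⊢
    obtain ⟨-, hπ⟩ := ha
    refine ⟨Finset.mem_univ _, ?_⟩
    obtain ⟨t, htm, hth⟩ := hthm π hπ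
    by_cases hA : pv π p < pv π (p+m-1)
    · rw [if_pos hA]
      exact hmem π (π * c) hπ (hagc π) ⟨t-1, by omega, hthc π t (htA π t hth hA) htm hth hA⟩
    · rw [if_neg hA]
      have ht2 := htNA π t htm hth hA
      exact hmem π (π * c⁻¹) hπ (hagci π) ⟨t+1, by omega, hthci π t ht2 hth hA⟩
  case hg₁ =>
    intro π ha
    rw [Finset.mem_filter] at ha
    obtain ⟨t, htm, hth⟩ := hthm π ha.2
    have hcard : ∀ (π' : Equiv.Perm (Fin n)) t', t' ≤ m-1 → Threshold π' p m t' →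
        (Des π' \ S).card =
          ((Des π' \ S) \ Finset.Icc (p+1) (p+m-1)).card + (m - 1 - t') := by
      intro π' t' htm' hth'
      rw [← Finset.card_sdiff_add_card_inter (Des π' \ S) (Finset.Icc (p+1) (p+m-1)),
          hInt π' t' htm' hth', Nat.card_Icc]
      congr 1
      omega
    by_cases hA : pv π p < pv π (p+m-1)
    · rw [if_pos hA]
      have ht1 := htA π t hth hA
      have h1 := hcard π t htm hth
      have h2 := hcard (π * c) (t-1) (by omega) (hthc π t ht1 htm hth hA)
      rw [hB π (π * c) (hagc π)] at h2
      rw [h1, h2, show m-1-(t-1) = (m-1-t)+1 by omega, pow_add, pow_add, pow_succ]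
      ring
    · rw [if_neg hA]
      have ht2 := htNA π t htm hth hA
      have h1 := hcard π t htm hth
      have h2 := hcard (π * c⁻¹) (t+1) (by omega) (hthci π t ht2 hth hA)
      rw [hB π (π * c⁻¹) (hagci π)] at h2
      rw [h1, h2, show m-1-t = (m-1-(t+1))+1 by omega, pow_add, pow_add, pow_succ]
      ring
  case hg₃ =>
    intro π ha hne0
    by_cases hA : pv π p < pv π (p+m-1)
    · rw [if_pos hA]
      intro heq
      have h1 : (π * c) ⟨p, hpn⟩ = π ⟨p, hpn⟩ := by rw [heq]
      rw [Equiv.Perm.mul_apply] at h1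
      have h2 := congrArg Fin.val (π.injective h1)
      rw [hc] at h2
      change cf p m p = p at h2
      rw [cf_mid (j := p) (le_refl p) (by omega)] at h2
      omega
    · rw [if_neg hA]
      intro heq
      have heq' : π * c = π := by
        have := congrArg (· * c) heq
        simpa [mul_assoc] using this
      have h1 : (π * c) ⟨p, hpn⟩ = π ⟨p, hpn⟩ := by rw [heq']
      rw [Equiv.Perm.mul_apply] at h1
      have h2 := congrArg Fin.val (π.injective h1)
      rw [hc] at h2
      change cf p m p = p at h2
      rw [cf_mid (j := p) (le_refl p) (by omega)] at h2
      omega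
  case hg₄ =>
    intro π ha
    rw [Finset.mem_filter] at ha
    obtain ⟨t, htm, hth⟩ := hthm π ha.2
    by_cases hA : pv π p < pv π (p+m-1)
    · rw [if_pos hA]
      have ht1 := htA π t hth hA
      have hcond : ¬ (pv (π * c) p < pv (π * c) (p+m-1)) := by
        rw [hc, pv_mul_cyc π hpm hm1 hpn, pv_mul_cyc π hpm hm1 hpmn,
            cf_mid (j := p) (le_refl p) (by omega), cf_last hm1]
        have h := (hth 0 (by omega)).1 (by omega)
        rw [show p + 0 = p by omega] at h
        omega
      rw [if_neg hcond]
      exact mul_inv_cancel_right π c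
    · rw [if_neg hA]
      have ht2 := htNA π t htm hth hA
      have hcond : pv (π * c⁻¹) p < pv (π * c⁻¹) (p+m-1) := by
        rw [hc, pv_mul_cyc_inv π hpm hm1 hpn, pv_mul_cyc_inv π hpm hm1 hpmn,
            cg_first hm1, cg_mid (j := p + m - 1) (by omega) (by omega)]
        have h := (hth (m-2) (by omega)).2 (by omega)
        rw [show p+(m-2)+1 = p+m-1 by omega, show p+(m-2) = p+m-1-1 by omega] at h
        exact h
      rw [if_pos hcond]
      exact inv_mul_cancel_right π c

end ZeroCase

end SSLU

open scoped Classical in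
/-- For a composition `λ` of `n`, the signed sum over all `λ`-unimodal permutations `π ∈ S_n`
of `(-1)^{|Des(π) \ S(λ)|}` equals `n!` if `λ = (1^n)` and `0` otherwise. -/
theorem signed_sum_lambda_unimodal (n k : ℕ) (l : List ℕ)
    (hk : l.length = k) (hpos : ∀ x ∈ l, 0 < x) (hsum : l.sum = n) :
    (∑ π ∈ Finset.univ.filter (fun π : Equiv.Perm (Fin n) => IsLambdaUnimodal l π),
      (-1 : ℤ) ^ (Des π \ partialSums l).card)
      = if l = List.replicate n 1 then (n.factorial : ℤ) else 0 := by
  by_cases hrep : l = List.replicate n 1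
  · rw [if_pos hrep]
    subst hrep
    have hfilter : (Finset.univ.filter
        (fun π : Equiv.Perm (Fin n) => IsLambdaUnimodal (List.replicate n 1) π)) =
        Finset.univ := by
      apply Finset.filter_true_of_mem
      intro π _ i hi
      refine ⟨0, fun j hj => absurd hj ?_⟩
      have h1 : (List.replicate n 1 : List ℕ).getD i 0 ≤ 1 := by
        rw [List.length_replicate] at hi
        rw [List.getD_eq_getElem _ 0 (by simpa using hi)]
        simp
      simp only [List.length_take, not_lt]
      omega
    rw [hfilter]
    have hdes : ∀ π : Equiv.Perm (Fin n), (Des π \ partialSums (List.replicate n 1)) = ∅ := by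
      intro π
      rw [Finset.sdiff_eq_empty_iff_subset]
      intro j hj
      rw [SSLU.Des_eq, Finset.mem_filter, Finset.mem_Icc] at hj
      obtain ⟨⟨hj1, hj2⟩, -⟩ := hj
      unfold partialSums
      refine Finset.mem_image.mpr ⟨j - 1, Finset.mem_range.mpr (by simp; omega), ?_⟩
      rw [show j - 1 + 1 = j by omega, List.take_replicate, List.sum_replicate]
      simp
      omega
    simp only [hdes, Finset.card_empty, pow_zero, Finset.sum_const, Finset.card_univ,
      Fintype.card_perm, Fintype.card_fin, nsmul_eq_mul, mul_one]
  · rw [if_neg hrep]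
    have hex : ∃ i0, ∃ h : i0 < l.length, 2 ≤ l.getD i0 0 := by
      by_contra hno
      push_neg at hno
      apply hrep
      have hall : ∀ x ∈ l, x = 1 := by
        intro x hx
        obtain ⟨i, hi, rfl⟩ := List.mem_iff_getElem.mp hx
        have h1 := hno i hi
        have h2 := hpos _ hx
        rw [List.getD_eq_getElem _ 0 hi] at h1
        omega
      have hlrep : l = List.replicate l.length 1 := List.eq_replicate_length.mpr hall
      have hlen : l.length = n := by
        conv_lhs at hsum => rw [hlrep]
        rw [List.sum_replicate] at hsum
        simpa using hsum
      rw [hlen] at hlrep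
      exact hlrep
    obtain ⟨i0, hi0, hm2⟩ := hex
    exact SSLU.zero_case hsum hi0 rfl rfl hm2
end

section
/- Let g = (1 2 ⋯ n) ∈ S_n, let H = ⟨g⟩, let ζ ∈ ℂ be a primitive n-th root of unity, and define ψ : S_n → ℂ by ψ(g^i) = ζ^i for 0 ≤ i < n and ψ(σ) = 0 for σ ∉ H; define χ : S_n → ℂ by χ(τ) = (1/n) · Σ_{σ ∈ S_n} ψ(σ⁻¹τσ). Then the restriction of χ to the subgroup of permutations fixing n is the character of the regular representation of S_{n−1}: for every τ ∈ S_n with τ(n) = n, χ(τ) = (n−1)! if τ is the identity and χ(τ) = 0 otherwise. -/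
/-!
Nontrivial powers of the full cycle `g` have no fixed points. A nontrivial `τ` fixing `n` has
only conjugates with a fixed point, so none of them lies in `⟨g⟩` and every term of the sum
defining `χ τ` vanishes; at `τ = 1` all `n!` terms equal `ψ 1 = 1`.
-/

open Equiv.Perm

namespace Equiv.Perm

variable {α : Type*}

theorem IsCycle.eq_one_of_mem_zpowers_of_apply_eq [Finite α] {f π : Perm α} (hf : IsCycle f)
    (hf_moves : ∀ x, f x ≠ x) (hπ : π ∈ Subgroup.zpowers f) {x : α} (hx : π x = x) : π = 1 := by
  obtain ⟨k, rfl⟩ := mem_powers_iff_mem_zpowers.2 hπ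
  exact (hf.pow_eq_one_iff' (hf_moves x)).2 hx

theorem eq_one_of_mem_zpowers_finRotate_of_apply_eq {n : ℕ} {π : Perm (Fin n)}
    (hπ : π ∈ Subgroup.zpowers (finRotate n)) {x : Fin n} (hx : π x = x) : π = 1 := by
  rcases lt_or_ge n 2 with hn | hn
  · have : Subsingleton (Fin n) := Fin.subsingleton_iff_le_one.2 (by omega)
    exact Subsingleton.elim _ _
  · refine (isCycle_finRotate_of_le hn).eq_one_of_mem_zpowers_of_apply_eq (fun y ↦ ?_) hπ hx
    rw [← mem_support, support_finRotate_of_le hn]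
    exact Finset.mem_univ y

theorem sum_conj_eq_zero_of_apply_eq [Fintype α] [DecidableEq α] {M : Type*} [AddCommMonoid M]
    {H : Subgroup (Perm α)} (hH : ∀ π ∈ H, ∀ x, π x = x → π = 1) {ψ : Perm α → M}
    (hψ : ∀ σ ∉ H, ψ σ = 0) {τ : Perm α} (hτ : τ ≠ 1) {x : α} (hx : τ x = x) :
    ∑ σ : Perm α, ψ (σ⁻¹ * τ * σ) = 0 := by
  refine Finset.sum_eq_zero fun σ _ ↦ hψ _ fun hmem ↦ hτ ?_
  have hfix : (σ⁻¹ * τ * σ) (σ⁻¹ x) = σ⁻¹ x := by simp [hx]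
  have hconj := hH _ hmem _ hfix
  rw [mul_assoc, inv_mul_eq_one] at hconj
  exact mul_eq_right.1 hconj.symm

end Equiv.Perm

theorem induced_character_restriction_regular_general (n : ℕ) (hn : 0 < n) (ζ : ℂ)
    (ψ χ : Equiv.Perm (Fin n) → ℂ)
    (hψ₁ : ∀ i : ℕ, i < n → ψ (finRotate n ^ i) = ζ ^ i)
    (hψ₂ : ∀ σ : Equiv.Perm (Fin n), σ ∉ Subgroup.zpowers (finRotate n) → ψ σ = 0)
    (hχ : ∀ τ : Equiv.Perm (Fin n),
      χ τ = (1 / (n : ℂ)) * ∑ σ : Equiv.Perm (Fin n), ψ (σ⁻¹ * τ * σ)) :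
    ∀ τ : Equiv.Perm (Fin n),
      τ ⟨n - 1, Nat.sub_lt hn Nat.one_pos⟩ = ⟨n - 1, Nat.sub_lt hn Nat.one_pos⟩ →
      χ τ = if τ = 1 then ((n - 1).factorial : ℂ) else 0 := by
  intro τ hτ
  rw [hχ]
  split_ifs with h
  · subst h
    have hψ_one : ψ 1 = 1 := by simpa using hψ₁ 0 hn
    have hn_ne : (n : ℂ) ≠ 0 := Nat.cast_ne_zero.2 hn.ne'
    simp only [mul_one, inv_mul_cancel, hψ_one, Finset.sum_const, Finset.card_univ,
      Fintype.card_perm, Fintype.card_fin, nsmul_eq_mul, ← Nat.mul_factorial_pred hn.ne']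
    push_cast
    field_simp
  · rw [sum_conj_eq_zero_of_apply_eq (fun π hπ _ ↦ eq_one_of_mem_zpowers_finRotate_of_apply_eq hπ)
      hψ₂ h hτ, mul_zero]

/-- Let `g = (1 2 ⋯ n)`, `H = ⟨g⟩`, `ζ` a primitive `n`-th root of unity, `ψ` the class
function with `ψ(gⁱ) = ζⁱ` for `0 ≤ i < n` and `ψ(σ) = 0` for `σ ∉ H`, and
`χ(τ) = (1/n)·∑_{σ ∈ S_n} ψ(σ⁻¹τσ)` the induced character. Then the restriction of `χ` to the
subgroup of permutations fixing `n` is the character of the regular representation of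
`S_{n-1}`: for `τ` fixing `n`, `χ(τ) = (n-1)!` if `τ = 1` and `χ(τ) = 0` otherwise. -/
theorem induced_character_restriction_regular (n : ℕ) (hn : 0 < n) (ζ : ℂ)
    (hζ : IsPrimitiveRoot ζ n) (ψ χ : Equiv.Perm (Fin n) → ℂ)
    (hψ₁ : ∀ i : ℕ, i < n → ψ (finRotate n ^ i) = ζ ^ i)
    (hψ₂ : ∀ σ : Equiv.Perm (Fin n), σ ∉ Subgroup.zpowers (finRotate n) → ψ σ = 0)
    (hχ : ∀ τ : Equiv.Perm (Fin n),
      χ τ = (1 / (n : ℂ)) * ∑ σ : Equiv.Perm (Fin n), ψ (σ⁻¹ * τ * σ)) :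
    ∀ τ : Equiv.Perm (Fin n),
      τ ⟨n - 1, Nat.sub_lt hn Nat.one_pos⟩ = ⟨n - 1, Nat.sub_lt hn Nat.one_pos⟩ →
      χ τ = if τ = 1 then ((n - 1).factorial : ℂ) else 0 :=
  induced_character_restriction_regular_general n hn ζ ψ χ hψ₁ hψ₂ hχ
end
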